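/- arXiv:math/0408342 — 8 statements merged into one kernel-verified Lean document; each statement's English description precedes it below -/
import Mathlib

section
/- Let n be a positive integer and let e + b ⊂ M(n) be the affine subspace of matrices whose subdiagonal entries are all −1, whose entries below the subdiagonal are 0, and whose entries on and above the diagonal are arbitrary. Then the restriction to e + b of the map Φ_n : M(n) → ℂ^{d(n)} is a bijection from e + b onto ℂ^{d(n)}. -/
open Matrix Polynomial

noncomputable section

attribute [local instance] Matrix.normedAddCommGroup Matrix.normedSpace

def d (k : ℕ) : ℕ := k * (k + 1) / 2

def cutoff {n : ℕ} (x : Matrix (Fin n) (Fin n) ℂ) {m : ℕ} (h : m ≤ n) :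
    Matrix (Fin m) (Fin m) ℂ :=
  Matrix.of fun i j => x (Fin.castLE h i) (Fin.castLE h j)

def Phi (n : ℕ) (x : Matrix (Fin n) (Fin n) ℂ) : (Σ m : Fin n, Fin (m.1 + 1)) → ℂ :=
  fun p => (-1 : ℂ) ^ (p.1.1 - p.2.1 + 1) * ((cutoff x p.1.2).charpoly.coeff p.2.1)

def StronglyRegular {n : ℕ} (x : Matrix (Fin n) (Fin n) ℂ) : Prop :=
  Function.Surjective (fderiv ℂ (Phi n) x)

def InEB {n : ℕ} (x : Matrix (Fin n) (Fin n) ℂ) : Prop :=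
  (∀ i j : Fin n, i.1 = j.1 + 1 → x i j = -1) ∧
  (∀ i j : Fin n, j.1 + 1 < i.1 → x i j = 0)

def EigDisjoint {n : ℕ} (x : Matrix (Fin n) (Fin n) ℂ) : Prop :=
  (∀ (m : ℕ) (_ : 1 ≤ m) (hm : m ≤ n), (cutoff x hm).charpoly.roots.toFinset.card = m) ∧
  (∀ (m : ℕ) (_ : 1 ≤ m) (hm : m + 1 ≤ n) (z : ℂ),
    ¬((cutoff x (Nat.le_of_succ_le hm)).charpoly.IsRoot z ∧
      (cutoff x hm).charpoly.IsRoot z))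

def embed {n m : ℕ} (h : m ≤ n) (y : Matrix (Fin m) (Fin m) ℂ) :
    Matrix (Fin n) (Fin n) ℂ :=
  Matrix.of fun i j =>
    if hi : i.1 < m then if hj : j.1 < m then y ⟨i.1, hi⟩ ⟨j.1, hj⟩ else 0 else 0

def GSet {n : ℕ} (x : Matrix (Fin n) (Fin n) ℂ) {m : ℕ} (h : m ≤ n) :
    Set (Matrix (Fin n) (Fin n) ℂ) :=
  {g | IsUnit g ∧
    (∀ i j : Fin n, m ≤ i.1 ∨ m ≤ j.1 → g i j = (1 : Matrix (Fin n) (Fin n) ℂ) i j) ∧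
    cutoff g h ∈ Submodule.span ℂ (Set.range fun k : ℕ => (cutoff x h) ^ k)}

def centSubmodule {n : ℕ} (x : Matrix (Fin n) (Fin n) ℂ) :
    Submodule ℂ (Matrix (Fin n) (Fin n) ℂ) where
  carrier := {y | x * y = y * x}
  add_mem' := fun {a b} ha hb => by
    simp only [Set.mem_setOf_eq] at *
    rw [mul_add, add_mul, ha, hb]
  zero_mem' := by simp
  smul_mem' := fun c a ha => by
    simp only [Set.mem_setOf_eq] at *
    rw [mul_smul_comm, smul_mul_assoc, ha]

def Zsub {n : ℕ} (x : Matrix (Fin n) (Fin n) ℂ) {m : ℕ} (h : m ≤ n) :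
    Submodule ℂ (Matrix (Fin n) (Fin n) ℂ) :=
  Submodule.span ℂ (Set.range fun k : ℕ => embed h ((cutoff x h) ^ k))

def IsJacobi {n : ℕ} (x : Matrix (Fin n) (Fin n) ℂ) : Prop :=
  (∀ i j : Fin n, (i.1 + 1 < j.1 ∨ j.1 + 1 < i.1) → x i j = 0) ∧
  (∀ i j : Fin n, (i.1 + 1 = j.1 ∨ j.1 + 1 = i.1) → x i j ≠ 0)

/-!
Write `p k` for the characteristic polynomial of the cutoff `x_k`, so `p 0 = 1`. For `x ∈ e + b`
the matrix `λ - x_{m+1}` has `1` on its subdiagonal and `0` below it, so the minor obtained by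
deleting its row `i` and its last column is `p i`, and expanding along the last column gives
`p (m + 1) = λ p m + ∑_{i ≤ m} (-1)^(i+m+1) x_{i,m} p i`.
As `p 0, …, p m` are monic of degrees `0, …, m`, they form a basis of the polynomials of degree
`≤ m`; hence column `m` of `x` is determined by `p 0, …, p (m + 1)`, and every monic `p (m + 1)`
of degree `m + 1` is reached by some column. Up to sign, `Φ_n x` lists the non-leading
coefficients of `p 1, …, p n`.
-/

theorem Polynomial.Monic.eq_of_natDegree_eq_of_coeff_eq {R : Type*} [Semiring R] {p q : R[X]}
    (hp : p.Monic) (hq : q.Monic) (hpq : p.natDegree = q.natDegree)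
    (h : ∀ k < p.natDegree, p.coeff k = q.coeff k) : p = q := by
  rw [hp.as_sum, hq.as_sum, ← hpq]
  exact congrArg _ (Finset.sum_congr rfl fun k hk => by rw [h k (Finset.mem_range.1 hk)])

namespace Polynomial.Sequence

theorem exists_sum_fin_smul_eq {R : Type*} [Ring R] (S : Sequence R) {m : ℕ}
    (hS : ∀ i < m, IsUnit (S i).leadingCoeff) {q : R[X]} (hq : q ∈ degreeLT R m) :
    ∃ a : Fin m → R, ∑ i, a i • S i = q := by
  rw [← S.span_degreeLT hS, ← Fin.range_val, ← Set.range_comp] at hq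
  exact (Submodule.mem_span_range_iff_exists_fun R).1 hq

theorem exists_sum_fin_smul_eq_sub_X_mul {R : Type*} [Ring R] [Nontrivial R] (S : Sequence R)
    (hS : ∀ i, (S i).Monic) (j : ℕ) :
    ∃ a : Fin (j + 1) → R, ∑ i, a i • S i = S (j + 1) - X * S j := by
  refine S.exists_sum_fin_smul_eq (fun i _ => by simp [(hS i).leadingCoeff]) ?_
  have h_deg : (S (j + 1)).degree = (X * S j).degree := by
    rw [(hS j).degree_mul, degree_X, S.degree_eq, S.degree_eq, add_comm]
    norm_cast
  rw [mem_degreeLT, ← S.degree_eq (j + 1)]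
  exact degree_sub_lt_left h_deg (S.ne_zero _)
    (by rw [(hS _).leadingCoeff, (monic_X.mul (hS j)).leadingCoeff])

theorem sum_fin_smul_injective {R : Type*} [Ring R] [IsDomain R] (S : Sequence R) (m : ℕ) :
    Function.Injective fun a : Fin m → R => ∑ i, a i • S i := fun a b h =>
  _root_.funext <|
    Fintype.linearIndependent_iffₛ.1 (S.linearIndependent.comp _ Fin.val_injective) a b h

variable {R : Type*} [Semiring R] [Nontrivial R]

def ofCoeffs (b : ℕ → ℕ → R) : Sequence R where
  elems' s := X ^ s + ∑ k : Fin s, C (b s k) * X ^ (k : ℕ)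
  degree_eq' s := by
    rw [degree_add_eq_left_of_degree_lt (by rw [degree_X_pow]; exact degree_sum_fin_lt _),
      degree_X_pow]

theorem ofCoeffs_monic (b : ℕ → ℕ → R) (s : ℕ) : (ofCoeffs b s).Monic :=
  monic_X_pow_add (degree_sum_fin_lt _)

theorem coeff_ofCoeffs (b : ℕ → ℕ → R) {s k : ℕ} (hk : k < s) : (ofCoeffs b s).coeff k = b s k := by
  simp only [ofCoeffs, coeff_add, coeff_X_pow, hk.ne, if_false, zero_add, finsetSum_coeff,
    coeff_C_mul_X_pow]
  rw [Fin.sum_univ_eq_sum_range (fun i => if k = i then b s i else 0), Finset.sum_ite_eq,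
    if_pos (Finset.mem_range.2 hk)]

end Polynomial.Sequence

/- Unless `i` is last, the last row of the minor is `(0, …, 0, 1)`; expanding along it deletes that
row and the last column, which is the same statement one size down. -/
theorem Matrix.det_submatrix_succAbove_of_hessenberg {R : Type*} [CommRing R] :
    ∀ {m : ℕ} (A : Matrix (Fin (m + 1)) (Fin m) R),
      (∀ r c, c.1 + 1 < r.1 → A r c = 0) → (∀ c, A c.succ c = 1) → ∀ i : Fin (m + 1),
      (A.submatrix i.succAbove id).det =
        (A.submatrix (Fin.castLE i.is_le') (Fin.castLE i.is_le)).det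
  | 0, A, _, _, i => by
    obtain rfl := Fin.fin_one_eq_zero i
    simp
  | m + 1, A, h_zero, h_one, i => by
    induction i using Fin.lastCases with
    | last => rw [Fin.succAbove_last]; rfl
    | cast i =>
      have h_last : (Fin.castSucc i).succAbove (Fin.last m) = Fin.last (m + 1) := by
        rw [Fin.succAbove_of_le_castSucc _ _ (Fin.castSucc_le_castSucc_iff.2 (Fin.le_last i)),
          Fin.succ_last]
      have h_last_row (j : Fin (m + 1)) (hj : j ≠ Fin.last m) : A (Fin.last (m + 1)) j = 0 :=
        h_zero _ _ (by simpa [Fin.ext_iff, Fin.lt_def] using Fin.lt_last_iff_ne_last.2 hj)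
      rw [det_succ_row _ (Fin.last m), Finset.sum_eq_single (Fin.last m)
        (fun j _ hj => by simp [h_last, h_last_row j hj]) (by simp)]
      have := det_submatrix_succAbove_of_hessenberg (A.submatrix Fin.castSucc Fin.castSucc)
        (fun r c h => h_zero _ _ h) (fun c => by simpa using h_one c.castSucc) i
      simp only [submatrix_apply, h_last, id, ← Fin.succ_last, h_one, Fin.succAbove_last,
        submatrix_submatrix, Function.comp_def, Fin.castSucc_succAbove_castSucc]
      rw [Even.neg_one_pow ⟨_, rfl⟩, mul_one, one_mul]
      exact this

theorem cutoff_cutoff {n m k : ℕ} (x : Matrix (Fin n) (Fin n) ℂ) (hm : m ≤ n) (hk : k ≤ m) :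
    cutoff (cutoff x hm) hk = cutoff x (hk.trans hm) :=
  rfl

theorem InEB.inEB_cutoff {n : ℕ} {x : Matrix (Fin n) (Fin n) ℂ} (hx : InEB x) {m : ℕ} (h : m ≤ n) :
    InEB (cutoff x h) :=
  ⟨fun _ _ hij => hx.1 _ _ hij, fun _ _ hij => hx.2 _ _ hij⟩

theorem InEB.ext {n : ℕ} {x y : Matrix (Fin n) (Fin n) ℂ} (hx : InEB x) (hy : InEB y)
    (h : ∀ i j : Fin n, i ≤ j → x i j = y i j) : x = y := by
  ext i j
  rcases lt_trichotomy i.1 (j.1 + 1) with hij | hij | hij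
  · exact h i j (Fin.le_iff_val_le_val.2 (Nat.le_of_lt_succ hij))
  · rw [hx.1 i j hij, hy.1 i j hij]
  · rw [hx.2 i j hij, hy.2 i j hij]

theorem charpoly_cutoff_eq_det_submatrix {n m : ℕ} (x : Matrix (Fin n) (Fin n) ℂ) (h : m ≤ n) :
    (cutoff x h).charpoly = ((charmatrix x).submatrix (Fin.castLE h) (Fin.castLE h)).det := by
  rw [Matrix.charpoly]
  congr 1
  ext i j
  simp [cutoff, charmatrix_apply, diagonal_apply]

theorem InEB.charpoly_eq {m : ℕ} {y : Matrix (Fin (m + 1)) (Fin (m + 1)) ℂ} (hy : InEB y) :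
    y.charpoly = X * (cutoff y m.le_succ).charpoly +
      ∑ i : Fin (m + 1),
        ((-1) ^ (i.1 + m + 1) * y i (Fin.last m)) • (cutoff y i.is_le').charpoly := by
  have h_minor : ∀ i : Fin (m + 1),
      ((charmatrix y).submatrix i.succAbove (Fin.last m).succAbove).det =
        (cutoff y i.is_le').charpoly := by
    intro i
    rw [Fin.succAbove_last, charpoly_cutoff_eq_det_submatrix]
    refine det_submatrix_succAbove_of_hessenberg ((charmatrix y).submatrix id Fin.castSucc)
      (fun r c hrc => ?_) (fun c => ?_) i
    · have hne : r ≠ c.castSucc := fun h => by simp [h] at hrc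
      simp [charmatrix_apply_ne _ _ _ hne, hy.2 r c.castSucc (by simpa using hrc)]
    · simp [charmatrix_apply_ne _ _ _ (Fin.castSucc_lt_succ (i := c)).ne',
        hy.1 c.succ c.castSucc (by simp)]
  rw [Matrix.charpoly, det_succ_column _ (Fin.last m)]
  simp_rw [h_minor]
  rw [Fin.sum_univ_castSucc, Fin.sum_univ_castSucc, charmatrix_apply_eq]
  simp_rw [charmatrix_apply_ne _ _ _ (Fin.castSucc_lt_last _).ne, smul_eq_C_mul]
  simp only [Fin.val_last, Fin.val_castSucc, map_mul, map_pow, map_neg, map_one]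
  have h_last : (cutoff y (Fin.last m).is_le').charpoly = (cutoff y m.le_succ).charpoly := rfl
  have h_term : ∀ i : Fin m, (-1 : ℂ[X]) ^ (i.1 + m) * -C (y i.castSucc (Fin.last m)) =
      (-1) ^ (i.1 + m + 1) * C (y i.castSucc (Fin.last m)) := fun i => by ring
  simp_rw [h_last, h_term, pow_succ]
  rw [Even.neg_one_pow ⟨m, rfl⟩]
  ring

def cutoffCharpolys {n : ℕ} (x : Matrix (Fin n) (Fin n) ℂ) : Polynomial.Sequence ℂ where
  elems' s := if h : s ≤ n then (cutoff x h).charpoly else X ^ s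
  degree_eq' s := by split_ifs <;> simp [charpoly_degree_eq_dim]

theorem cutoffCharpolys_of_le {n s : ℕ} (x : Matrix (Fin n) (Fin n) ℂ) (h : s ≤ n) :
    cutoffCharpolys x s = (cutoff x h).charpoly :=
  dif_pos h

theorem cutoffCharpolys_of_not_le {n s : ℕ} (x : Matrix (Fin n) (Fin n) ℂ) (h : ¬s ≤ n) :
    cutoffCharpolys x s = X ^ s :=
  dif_neg h

theorem cutoffCharpolys_monic {n : ℕ} (x : Matrix (Fin n) (Fin n) ℂ) (s : ℕ) :
    (cutoffCharpolys x s).Monic := by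
  by_cases h : s ≤ n
  · rw [cutoffCharpolys_of_le x h]; exact charpoly_monic _
  · rw [cutoffCharpolys_of_not_le x h]; exact monic_X_pow s

theorem InEB.sum_smul_cutoffCharpolys {n : ℕ} {x : Matrix (Fin n) (Fin n) ℂ} (hx : InEB x)
    (j : Fin n) :
    ∑ i : Fin (j + 1), ((-1) ^ (i.1 + j.1 + 1) * x (Fin.castLE j.2 i) j) • cutoffCharpolys x i =
      cutoffCharpolys x (j + 1) - X * cutoffCharpolys x j := by
  rw [cutoffCharpolys_of_le x j.2, cutoffCharpolys_of_le x j.2.le,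
    (hx.inEB_cutoff j.2).charpoly_eq]
  simp only [cutoff_cutoff, add_sub_cancel_left]
  exact Finset.sum_congr rfl fun i _ => by rw [cutoffCharpolys_of_le x (i.is_le.trans j.2.le)]; rfl

theorem InEB.eq_of_cutoffCharpolys_eq {n : ℕ} {x y : Matrix (Fin n) (Fin n) ℂ} (hx : InEB x)
    (hy : InEB y) (h : ∀ s, cutoffCharpolys x s = cutoffCharpolys y s) : x = y := by
  refine hx.ext hy fun i j hij => ?_
  have hy_col := hy.sum_smul_cutoffCharpolys j
  simp only [← h] at hy_col
  have h_col := (cutoffCharpolys x).sum_fin_smul_injective (j + 1)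
    ((hx.sum_smul_cutoffCharpolys j).trans hy_col.symm)
  exact mul_left_cancel₀ (pow_ne_zero _ (neg_ne_zero.2 one_ne_zero))
    (congrFun h_col ⟨i, Nat.lt_succ_of_le hij⟩)

theorem exists_inEB_cutoffCharpolys_eq (n : ℕ) (S : Polynomial.Sequence ℂ)
    (hS : ∀ s, (S s).Monic) :
    ∃ x : Matrix (Fin n) (Fin n) ℂ, InEB x ∧ ∀ s ≤ n, cutoffCharpolys x s = S s := by
  choose a ha using S.exists_sum_fin_smul_eq_sub_X_mul hS
  let x : Matrix (Fin n) (Fin n) ℂ := Matrix.of fun i j =>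
    if h : i ≤ j then (-1) ^ (i.1 + j.1 + 1) * a j ⟨i, Nat.lt_succ_of_le h⟩
    else if i.1 = j.1 + 1 then -1 else 0
  have hx : InEB x := by
    refine ⟨fun i j hij => ?_, fun i j hij => ?_⟩
    · simp [x, not_le.2 (Fin.lt_def.2 (by omega : j.1 < i.1)), hij]
    · simp [x, not_le.2 (Fin.lt_def.2 (by omega : j.1 < i.1)), show i.1 ≠ j.1 + 1 by omega]
  refine ⟨x, hx, fun s => ?_⟩
  induction s using Nat.strong_induction_on with
  | _ s ih =>
    intro hs
    cases s with
    | zero =>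
      exact (cutoffCharpolys_monic x 0).eq_of_natDegree_eq_of_coeff_eq (hS 0) (by simp)
        fun k hk => by simp at hk
    | succ j =>
      have h_rec := hx.sum_smul_cutoffCharpolys ⟨j, hs⟩
      have h_term (i : Fin (j + 1)) :
          ((-1) ^ (i.1 + j + 1) * x (Fin.castLE hs i) ⟨j, hs⟩) • cutoffCharpolys x i =
            a j i • S i := by
        have hij : Fin.castLE hs i ≤ ⟨j, hs⟩ := Fin.le_iff_val_le_val.2 i.is_le
        rw [ih i (by omega) (by omega)]
        simp [x, hij, ← mul_assoc, ← mul_pow]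
      simp only [h_term, ha, ih j (by omega) (by omega)] at h_rec
      exact (sub_left_inj.1 h_rec).symm

theorem cutoffCharpolys_eq_of_Phi_eq {n : ℕ} {x y : Matrix (Fin n) (Fin n) ℂ}
    (h : Phi n x = Phi n y) (s : ℕ) : cutoffCharpolys x s = cutoffCharpolys y s := by
  by_cases hs : s ≤ n
  · refine (cutoffCharpolys_monic x s).eq_of_natDegree_eq_of_coeff_eq (cutoffCharpolys_monic y s)
      (by simp) fun k hk => ?_
    rw [Polynomial.Sequence.natDegree_eq] at hk
    obtain ⟨m, rfl⟩ : ∃ m, s = m + 1 := ⟨s - 1, by omega⟩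
    rw [cutoffCharpolys_of_le x hs, cutoffCharpolys_of_le y hs]
    exact mul_left_cancel₀ (pow_ne_zero _ (neg_ne_zero.2 one_ne_zero))
      (congrFun h ⟨⟨m, hs⟩, ⟨k, hk⟩⟩)
  · rw [cutoffCharpolys_of_not_le x hs, cutoffCharpolys_of_not_le y hs]

-- `phiCoeffs c (m + 1) k` is the coefficient of `X ^ k` in `p (m + 1)` that makes `Phi` equal `c`.
def phiCoeffs {n : ℕ} (c : (Σ m : Fin n, Fin (m.1 + 1)) → ℂ) : ℕ → ℕ → ℂ
  | 0, _ => 0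
  | m + 1, k => if h : m < n ∧ k < m + 1 then (-1) ^ (m - k + 1) * c ⟨⟨m, h.1⟩, ⟨k, h.2⟩⟩ else 0

theorem Phi_eq_of_cutoffCharpolys_eq {n : ℕ} {x : Matrix (Fin n) (Fin n) ℂ}
    {c : (Σ m : Fin n, Fin (m.1 + 1)) → ℂ}
    (h : ∀ s ≤ n, cutoffCharpolys x s = Polynomial.Sequence.ofCoeffs (phiCoeffs c) s) :
    Phi n x = c := by
  funext ⟨m, k⟩
  rw [Phi, ← cutoffCharpolys_of_le x m.2, h _ m.2, Polynomial.Sequence.coeff_ofCoeffs _ k.2]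
  simp [phiCoeffs, m.2, k.2, ← mul_assoc, ← mul_pow]

theorem stmt0_general (n : ℕ) :
    Set.BijOn (Phi n) {x : Matrix (Fin n) (Fin n) ℂ | InEB x} Set.univ := by
  refine ⟨fun _ _ => trivial, fun x hx y hy hxy => ?_, fun c _ => ?_⟩
  · exact hx.eq_of_cutoffCharpolys_eq hy (cutoffCharpolys_eq_of_Phi_eq hxy)
  · obtain ⟨x, hx, hS⟩ := exists_inEB_cutoffCharpolys_eq n _
      (Polynomial.Sequence.ofCoeffs_monic (phiCoeffs c))
    exact ⟨x, hx, Phi_eq_of_cutoffCharpolys_eq hS⟩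

/-- The restriction of `Φ_n` to the affine subspace `e + b` is a bijection
onto `ℂ^{d(n)}`. -/
theorem stmt0 (n : ℕ) (hn : 0 < n) :
    Set.BijOn (Phi n) {x : Matrix (Fin n) (Fin n) ℂ | InEB x} Set.univ :=
  stmt0_general n
end
end

section
/- Let n be a positive integer and let e + b ⊂ M(n) be the affine subspace of matrices whose subdiagonal entries are all −1, whose entries below the subdiagonal are 0, and whose entries on and above the diagonal are arbitrary. Then every x ∈ e + b is strongly regular; that is, the (Fréchet) derivative of Φ_n at x is a surjective linear map from M(n) onto ℂ^{d(n)}. -/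
open Matrix Polynomial

noncomputable section

attribute [local instance] Matrix.normedAddCommGroup Matrix.normedSpace

/-!
Differentiate `Phi` in the direction of the elementary matrix `E_{k,m}` (row `k`, column `m`,
indices from `0`; component `⟨m, k⟩` of `Phi` is `f_{k+1,m+1}`). Cutoffs of size `≤ m` do not
see column `m`, and on the cutoff of size `m + 1` the derivative of the characteristic polynomial
is minus the cofactor `adj(λ - x_{m+1})_{m,k}`. For `x ∈ e + b` the matrix `λ - x` is upper
Hessenberg with subdiagonal entries `1`, so that cofactor is `± det(λ - x_k)`, a monic polynomial
of degree `k`. Ordering the components by `m` and then by decreasing `k`, the Jacobian is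
therefore triangular with diagonal entries `±1`.
-/

theorem Matrix.BlockTriangular.det_eq_prod_diag_of_injective {ι α R : Type*} [Fintype ι]
    [DecidableEq ι] [LinearOrder α] [CommRing R] {M : Matrix ι ι R} {b : ι → α}
    (hM : M.BlockTriangular b) (hb : Function.Injective b) : M.det = ∏ i, M i i := by
  let := LinearOrder.lift' b hb
  exact det_of_isUpperTriangular fun _ _ h => hM h

theorem LinearMap.surjective_of_blockTriangular {K ι α E : Type*} [Field K] [Fintype ι]
    [DecidableEq ι] [LinearOrder α] [AddCommGroup E] [Module K E] (L : E →ₗ[K] ι → K)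
    (v : ι → E) {b : ι → α} (hb : Function.Injective b)
    (htri : (Matrix.of fun p q => L (v p) q).BlockTriangular b) (hdiag : ∀ p, L (v p) p ≠ 0) :
    Function.Surjective L := by
  have hunit : IsUnit (Matrix.of fun p q => L (v p) q) := by
    rw [Matrix.isUnit_iff_isUnit_det, htri.det_eq_prod_diag_of_injective hb, isUnit_iff_ne_zero]
    exact Finset.prod_ne_zero_iff.2 fun p _ => hdiag p
  intro w
  obtain ⟨c, rfl⟩ := Matrix.vecMul_surjective_iff_isUnit.2 hunit w
  refine ⟨∑ p, c p • v p, funext fun q => ?_⟩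
  simp [Matrix.vecMul, dotProduct]

theorem Matrix.charpoly_coeff_eq_aeval_univ {R ι : Type*} [CommRing R] [Fintype ι]
    [DecidableEq ι] (A : Matrix ι ι R) (k : ℕ) :
    A.charpoly.coeff k
      = MvPolynomial.aeval (fun ij : ι × ι => A ij.1 ij.2) ((charpoly.univ ℤ ι).coeff k) := by
  rw [MvPolynomial.aeval_def, ← MvPolynomial.coe_eval₂Hom, charpoly.univ_coeff_eval₂Hom]
  rfl

theorem Matrix.differentiable_charpoly_coeff {𝕜 ι : Type*} [NontriviallyNormedField 𝕜]
    [Fintype ι] [DecidableEq ι] (k : ℕ) :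
    Differentiable 𝕜 fun A : Matrix ι ι 𝕜 => A.charpoly.coeff k := by
  rw [show (fun A : Matrix ι ι 𝕜 => A.charpoly.coeff k) = _ from
    funext fun A => A.charpoly_coeff_eq_aeval_univ k]
  intro A
  refine (AnalyticAt.aeval_mvPolynomial (fun ij : ι × ι => ?_) _).differentiableAt
  exact ((ContinuousLinearMap.proj ij.2).comp
    (ContinuousLinearMap.proj ij.1 : Matrix ι ι 𝕜 →L[𝕜] ι → 𝕜)).analyticAt A

theorem Matrix.det_add_single {ι R : Type*} [Fintype ι] [DecidableEq ι] [CommRing R]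
    (P : Matrix ι ι R) (r s : ι) (u : R) :
    (P + single r s u).det = P.det + u * adjugate P s r := by
  have hrow : P + single r s u = P.updateRow r (P r + u • Pi.single s 1) := by
    ext i j
    by_cases hi : i = r
    · subst hi
      by_cases hj : j = s
      · subst hj; simp
      · simp [hj, Ne.symm hj]
    · simp [hi, Ne.symm hi]
  rw [hrow, det_updateRow_add, updateRow_eq_self, det_updateRow_smul, adjugate_apply]

theorem Matrix.charpoly_add_single_coeff {ι R : Type*} [Fintype ι] [DecidableEq ι] [CommRing R]
    (A : Matrix ι ι R) (r s : ι) (t : R) (k : ℕ) :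
    (A + single r s t).charpoly.coeff k
      = A.charpoly.coeff k - t * (adjugate (charmatrix A) s r).coeff k := by
  have hchar : charmatrix (A + single r s t) = charmatrix A + single r s (-C t) := by
    rw [charmatrix, charmatrix, map_add, RingHom.mapMatrix_apply, RingHom.mapMatrix_apply,
      map_single _ _ _ C, ← single_neg]
    abel
  rw [charpoly, hchar, det_add_single, ← charpoly, coeff_add, neg_mul, coeff_neg, coeff_C_mul,
    sub_eq_add_neg]

theorem Matrix.charmatrix_submatrix {ι ι' R : Type*} [Fintype ι] [DecidableEq ι] [Fintype ι']
    [DecidableEq ι'] [CommRing R] (A : Matrix ι ι R) {e : ι' → ι} (he : Function.Injective e) :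
    charmatrix (A.submatrix e e) = (charmatrix A).submatrix e e := by
  ext i j : 1
  by_cases hij : i = j
  · subst hij
    simp
  · simp [charmatrix_apply_ne _ _ _ hij, charmatrix_apply_ne _ _ _ (he.ne hij)]

theorem Matrix.det_eq_det_submatrix_castSucc_of_last_row {R : Type*} [CommRing R] {s : ℕ}
    (B : Matrix (Fin (s + 1)) (Fin (s + 1)) R) (h : B (Fin.last s) = Pi.single (Fin.last s) 1) :
    B.det = (B.submatrix Fin.castSucc Fin.castSucc).det := by
  rw [det_succ_row B (Fin.last s), Fintype.sum_eq_single (Fin.last s) fun j hj => by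
    rw [h, Pi.single_eq_of_ne hj, mul_zero, zero_mul]]
  rw [h, Pi.single_eq_same, Fin.succAbove_last, Fin.val_last, ← two_mul, pow_mul, neg_one_sq,
    one_pow, one_mul, one_mul]

structure Matrix.IsUnitHessenberg {R : Type*} [Zero R] [One R] {N : ℕ}
    (H : Matrix (Fin N) (Fin N) R) : Prop where
  subdiag : ∀ i j : Fin N, i.1 = j.1 + 1 → H i j = 1
  below_subdiag : ∀ i j : Fin N, j.1 + 1 < i.1 → H i j = 0

namespace Matrix.IsUnitHessenberg

variable {R : Type*} [CommRing R]

theorem submatrix_castLE {N M : ℕ} {H : Matrix (Fin N) (Fin N) R} (hH : H.IsUnitHessenberg)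
    (h : M ≤ N) : (H.submatrix (Fin.castLE h) (Fin.castLE h)).IsUnitHessenberg :=
  ⟨fun i j => hH.subdiag (Fin.castLE h i) (Fin.castLE h j),
    fun i j => hH.below_subdiag (Fin.castLE h i) (Fin.castLE h j)⟩

/-- This minor is block upper triangular with a unitriangular lower block: its last row is
`(0, …, 0, 1)` and can be peeled off inductively. -/
theorem det_submatrix_succAbove_castSucc {m : ℕ} {H : Matrix (Fin (m + 1)) (Fin (m + 1)) R}
    (hH : H.IsUnitHessenberg) (k : Fin (m + 1)) :
    (H.submatrix k.succAbove Fin.castSucc).det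
      = (H.submatrix (Fin.castLE k.is_le') (Fin.castLE k.is_le')).det := by
  induction m with
  | zero =>
    obtain rfl := Fin.fin_one_eq_zero k
    simp
  | succ m ih =>
    induction k using Fin.lastCases with
    | last => rw [Fin.succAbove_last]; rfl
    | cast k =>
      have hlast : (H.submatrix k.castSucc.succAbove Fin.castSucc) (Fin.last m)
          = Pi.single (Fin.last m) 1 := by
        funext j
        rw [submatrix_apply, Fin.succAbove_castSucc_of_le k _ (Fin.le_last k), Fin.succ_last]
        by_cases hj : j = Fin.last m
        · rw [hj, Pi.single_eq_same]
          exact hH.subdiag _ _ rfl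
        · rw [Pi.single_eq_of_ne hj]
          exact hH.below_subdiag _ _ (by simpa [Fin.ext_iff] using Fin.val_lt_last hj)
      have hsub :
          (H.submatrix k.castSucc.succAbove Fin.castSucc).submatrix Fin.castSucc Fin.castSucc =
            (H.submatrix Fin.castSucc Fin.castSucc).submatrix k.succAbove Fin.castSucc := by
        ext i j
        simp [Fin.castSucc_succAbove_castSucc]
      have hH' : (H.submatrix Fin.castSucc Fin.castSucc).IsUnitHessenberg :=
        hH.submatrix_castLE (Nat.le_succ _)
      rw [det_eq_det_submatrix_castSucc_of_last_row _ hlast, hsub, ih hH' k]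
      rfl

theorem adjugate_last_apply {m : ℕ} {H : Matrix (Fin (m + 1)) (Fin (m + 1)) R}
    (hH : H.IsUnitHessenberg) (k : Fin (m + 1)) :
    adjugate H (Fin.last m) k
      = (-1) ^ (k.1 + m) * (H.submatrix (Fin.castLE k.is_le') (Fin.castLE k.is_le')).det := by
  rw [adjugate_fin_succ_eq_det_submatrix, Fin.succAbove_last, hH.det_submatrix_succAbove_castSucc,
    Fin.val_last]

end Matrix.IsUnitHessenberg

theorem charmatrix_cutoff {n m : ℕ} (x : Matrix (Fin n) (Fin n) ℂ) (h : m ≤ n) :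
    charmatrix (cutoff x h) = (charmatrix x).submatrix (Fin.castLE h) (Fin.castLE h) :=
  charmatrix_submatrix x (Fin.castLE_injective h)

theorem InEB.isUnitHessenberg_charmatrix {n : ℕ} {x : Matrix (Fin n) (Fin n) ℂ} (hx : InEB x) :
    (charmatrix x).IsUnitHessenberg where
  subdiag i j h := by
    rw [charmatrix_apply_ne _ _ _ (by rintro rfl; omega), hx.1 i j h, map_neg, map_one, neg_neg]
  below_subdiag i j h := by
    rw [charmatrix_apply_ne _ _ _ (by rintro rfl; omega), hx.2 i j h, map_zero, neg_zero]

theorem InEB.adjugate_charmatrix_cutoff_last {n m : ℕ} {x : Matrix (Fin n) (Fin n) ℂ}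
    (hx : InEB x) (h : m + 1 ≤ n) (k : Fin (m + 1)) :
    adjugate (charmatrix (cutoff x h)) (Fin.last m) k
      = (-1) ^ (k.1 + m) * (cutoff x (k.is_le'.trans h)).charpoly := by
  rw [charmatrix_cutoff, (hx.isUnitHessenberg_charmatrix.submatrix_castLE h).adjugate_last_apply,
    submatrix_submatrix, Fin.castLE_comp_castLE, charpoly, charmatrix_cutoff]

theorem differentiable_cutoff {n m : ℕ} (h : m ≤ n) :
    Differentiable ℂ fun y : Matrix (Fin n) (Fin n) ℂ => cutoff y h := by
  show Differentiable ℂ fun y : Matrix (Fin n) (Fin n) ℂ =>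
    fun i j : Fin m => y (Fin.castLE h i) (Fin.castLE h j)
  fun_prop

theorem differentiable_Phi (n : ℕ) : Differentiable ℂ (Phi n) := fun x =>
  differentiableAt_pi.2 fun _ =>
    (((differentiable_charpoly_coeff _).comp (differentiable_cutoff _)).const_mul _) x

theorem cutoff_add_smul {n m : ℕ} (x v : Matrix (Fin n) (Fin n) ℂ) (t : ℂ) (h : m ≤ n) :
    cutoff (x + t • v) h = cutoff x h + t • cutoff v h :=
  rfl

theorem cutoff_single_castLE {n m : ℕ} (h : m ≤ n) (i j : Fin m) (a : ℂ) :
    cutoff (single (Fin.castLE h i) (Fin.castLE h j) a) h = single i j a := by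
  ext i' j'
  simp [cutoff, single_apply, (Fin.castLE_injective h).eq_iff]

theorem cutoff_single_of_le {n m : ℕ} (h : m ≤ n) (i j : Fin n) (a : ℂ) (hj : m ≤ j.1) :
    cutoff (single i j a) h = 0 := by
  ext i' j'
  have hne : Fin.castLE h j' ≠ j := fun he => by
    have := congrArg Fin.val he
    simp at this
    omega
  simp [cutoff, single_apply, hne.symm]

def phiDirection {n : ℕ} (p : Σ m : Fin n, Fin (m.1 + 1)) : Matrix (Fin n) (Fin n) ℂ :=
  single (Fin.castLE p.1.2 p.2) (Fin.castLE p.1.2 (Fin.last p.1)) 1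

theorem fderiv_Phi_phiDirection_of_lt {n : ℕ} (x : Matrix (Fin n) (Fin n) ℂ)
    {p q : Σ m : Fin n, Fin (m.1 + 1)} (hlt : q.1 < p.1) :
    fderiv ℂ (Phi n) x (phiDirection p) q = 0 := by
  have hline := hasDerivAt_pi.1 (((differentiable_Phi n x).hasFDerivAt).hasLineDerivAt
    (phiDirection p)) q
  have hconst : (fun t : ℂ => Phi n (x + t • phiDirection p) q) = fun _ => Phi n x q := by
    funext t
    rw [Phi, Phi, cutoff_add_smul, phiDirection, cutoff_single_of_le _ _ _ _ (by simpa using hlt),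
      smul_zero, add_zero]
  rw [hconst] at hline
  exact hline.unique (hasDerivAt_const _ _)

theorem InEB.fderiv_Phi_phiDirection {n : ℕ} {x : Matrix (Fin n) (Fin n) ℂ} (hx : InEB x)
    (m : Fin n) (k k' : Fin (m.1 + 1)) :
    fderiv ℂ (Phi n) x (phiDirection ⟨m, k⟩) ⟨m, k'⟩
      = (-1) ^ (m.1 - k'.1) * ((-1) ^ (k.1 + m.1) *
          (cutoff x (k.is_le'.trans m.2)).charpoly.coeff k'.1) := by
  have hline := hasDerivAt_pi.1 (((differentiable_Phi n x).hasFDerivAt).hasLineDerivAt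
    (phiDirection ⟨m, k⟩)) ⟨m, k'⟩
  set b := (-1) ^ (k.1 + m.1) * (cutoff x (k.is_le'.trans m.2)).charpoly.coeff k'.1
  have haffine : (fun t : ℂ => Phi n (x + t • phiDirection ⟨m, k⟩) ⟨m, k'⟩)
      = fun t => (-1) ^ (m.1 - k'.1 + 1) * ((cutoff x m.2).charpoly.coeff k'.1 - t * b) := by
    funext t
    rw [Phi, cutoff_add_smul, phiDirection, cutoff_single_castLE, smul_single, smul_eq_mul,
      mul_one, charpoly_add_single_coeff, hx.adjugate_charmatrix_cutoff_last, ← C_1, ← C_neg,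
      ← C_pow, coeff_C_mul]
  rw [haffine] at hline
  have hderiv := (((hasDerivAt_id' (0 : ℂ)).mul_const b).const_sub
    ((cutoff x m.2).charpoly.coeff k'.1)).const_mul ((-1 : ℂ) ^ (m.1 - k'.1 + 1))
  refine (hline.unique hderiv).trans ?_
  rw [pow_succ]
  ring

def phiOrder {n : ℕ} (p : Σ m : Fin n, Fin (m.1 + 1)) : ℕ ×ₗ ℕᵒᵈ :=
  toLex (p.1.1, OrderDual.toDual p.2.1)

theorem phiOrder_injective (n : ℕ) : Function.Injective (phiOrder (n := n)) := by
  rintro ⟨m, k⟩ ⟨m', k'⟩ h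
  obtain ⟨hm, hk⟩ := Prod.ext_iff.1 (toLex.injective h)
  obtain rfl : m = m' := Fin.ext hm
  obtain rfl : k = k' := Fin.ext hk
  rfl

theorem stmt1_general (n : ℕ) (x : Matrix (Fin n) (Fin n) ℂ) (hx : InEB x) :
    StronglyRegular x := by
  refine LinearMap.surjective_of_blockTriangular (fderiv ℂ (Phi n) x : _ →ₗ[ℂ] _) phiDirection
    (phiOrder_injective n) ?_ ?_
  · rintro ⟨m, k⟩ ⟨m', k'⟩ hlt
    rcases Prod.Lex.toLex_lt_toLex.1 hlt with hm | ⟨hm, hk⟩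
    · exact fderiv_Phi_phiDirection_of_lt x hm
    · obtain rfl : m' = m := Fin.ext hm
      rw [of_apply, ContinuousLinearMap.coe_coe, hx.fderiv_Phi_phiDirection,
        coeff_eq_zero_of_natDegree_lt (by simpa using hk), mul_zero, mul_zero]
  · rintro ⟨m, k⟩
    have hmonic : (cutoff x (k.is_le'.trans m.2)).charpoly.coeff k = 1 := by
      simpa [charpoly_natDegree_eq_dim] using (charpoly_monic (cutoff x _)).coeff_natDegree
    rw [ContinuousLinearMap.coe_coe, hx.fderiv_Phi_phiDirection, hmonic]
    simp

/-- Every element of `e + b` is strongly regular: the derivative of `Φ_n`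
at such a point is surjective. -/
theorem stmt1 (n : ℕ) (hn : 0 < n) (x : Matrix (Fin n) (Fin n) ℂ) (hx : InEB x) :
    StronglyRegular x :=
  stmt1_general n x hx
end
end

section
/- Let n be a positive integer and, for each m ∈ {1,...,n}, let q_m be an arbitrary monic polynomial of degree m with complex coefficients. Then there exists a unique x ∈ e + b such that the characteristic polynomial of the cutoff x_m equals q_m for every m ∈ {1,...,n}. (Equivalently: given arbitrary m-tuples E(m) of complex numbers for each m ∈ {1,...,n}, there exists a unique x ∈ e + b such that for every m, E(m) is, up to reordering, the m-tuple of roots, with multiplicity, of the characteristic polynomial of x_m.) -/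
open Matrix Polynomial

noncomputable section

attribute [local instance] Matrix.normedAddCommGroup Matrix.normedSpace

/- ### Auxiliary machinery ### -/

abbrev Pf (f : ℕ → ℕ → ℂ) (m : ℕ) : Polynomial ℂ :=
  (Matrix.of fun i j : Fin m => f i j).charpoly

lemma val_succAbove {s : ℕ} (i : Fin (s+1)) (j : Fin s) :
    ((i.succAbove j : Fin (s+1)) : ℕ) = if (j:ℕ) < (i:ℕ) then (j:ℕ) else (j:ℕ)+1 := by
  rcases lt_or_ge j.castSucc i with h|h
  · rw [Fin.succAbove_of_castSucc_lt _ _ h]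
    simp only [Fin.lt_def, Fin.coe_castSucc] at h
    simp [h]
  · rw [Fin.succAbove_of_le_castSucc _ _ h]
    simp only [Fin.le_def, Fin.coe_castSucc] at h
    rw [Fin.val_succ, if_neg (by omega)]

lemma charm (f : ℕ → ℕ → ℂ) (s : ℕ) (a b : Fin s) :
    charmatrix (Matrix.of fun i j : Fin s => f i j) a b
      = (if (a:ℕ) = (b:ℕ) then X else 0) - C (f a b) := by
  by_cases h : a = b
  · subst h; simp
  · rw [charmatrix_apply_ne _ _ _ h, if_neg (fun hv => h (Fin.ext hv))]
    simp [Matrix.of_apply]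

def blockEquiv (k m : ℕ) (h : k ≤ m) : Fin k ⊕ Fin (m - k) ≃ Fin m :=
  finSumFinEquiv.trans (finCongr (by omega))

lemma blockEquiv_inl (k m : ℕ) (h : k ≤ m) (r : Fin k) :
    ((blockEquiv k m h (Sum.inl r)) : ℕ) = (r : ℕ) := by
  simp [blockEquiv, finSumFinEquiv]

lemma blockEquiv_inr (k m : ℕ) (h : k ≤ m) (r : Fin (m - k)) :
    ((blockEquiv k m h (Sum.inr r)) : ℕ) = k + (r : ℕ) := by
  simp [blockEquiv, finSumFinEquiv]

lemma minor_det (f : ℕ → ℕ → ℂ) (hf1 : ∀ i, f (i+1) i = -1)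
    (hf2 : ∀ i j, j+1 < i → f i j = 0) (m : ℕ) (i : Fin (m+1)) :
    ((charmatrix (Matrix.of fun a b : Fin (m+1) => f a b)).submatrix
        i.succAbove Fin.castSucc).det = Pf f i := by
  have hk : (i : ℕ) ≤ m := by omega
  set k := (i : ℕ) with hkdef
  rw [← Matrix.det_submatrix_equiv_self (blockEquiv k m hk)]
  set N := (((charmatrix (Matrix.of fun a b : Fin (m+1) => f a b)).submatrix
        i.succAbove Fin.castSucc).submatrix (blockEquiv k m hk) (blockEquiv k m hk)) with hN
  have hentry : ∀ (a b : Fin m),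
      (charmatrix (Matrix.of fun a b : Fin (m+1) => f a b)) (i.succAbove a) (b.castSucc)
      = (if (if (a:ℕ) < k then (a:ℕ) else (a:ℕ)+1) = (b:ℕ) then X else 0)
        - C (f (if (a:ℕ) < k then (a:ℕ) else (a:ℕ)+1) (b:ℕ)) := by
    intro a b
    rw [charm, val_succAbove, Fin.coe_castSucc]
  have h21 : N.toBlocks₂₁ = 0 := by
    ext r c : 2
    simp only [Matrix.toBlocks₂₁, Matrix.of_apply, hN, Matrix.submatrix_apply, Matrix.zero_apply]
    rw [hentry]
    simp only [blockEquiv_inr, blockEquiv_inl]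
    have hc : (c : ℕ) < k := c.isLt
    rw [if_neg (by omega : ¬ (k + (r:ℕ) < k)),
      if_neg (by omega : ¬ (k + (r:ℕ) + 1 = (c:ℕ))), hf2 _ _ (by omega)]
    simp
  have h11 : N.toBlocks₁₁ = charmatrix (Matrix.of fun a b : Fin k => f a b) := by
    ext r c : 2
    simp only [Matrix.toBlocks₁₁, Matrix.of_apply, hN, Matrix.submatrix_apply]
    rw [hentry, charm]
    simp only [blockEquiv_inl]
    have hr : (r : ℕ) < k := r.isLt
    rw [if_pos hr]
  have h22tri : N.toBlocks₂₂.BlockTriangular id := by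
    intro r c hrc
    simp only [id] at hrc
    simp only [Matrix.toBlocks₂₂, Matrix.of_apply, hN, Matrix.submatrix_apply]
    rw [hentry]
    simp only [blockEquiv_inr]
    have hcr : (c : ℕ) < (r : ℕ) := hrc
    rw [if_neg (by omega : ¬ (k + (r:ℕ) < k)),
      if_neg (by omega : ¬ (k + (r:ℕ) + 1 = k + (c:ℕ))), hf2 _ _ (by omega)]
    simp
  have h22det : N.toBlocks₂₂.det = 1 := by
    rw [Matrix.det_of_upperTriangular h22tri]
    apply Finset.prod_eq_one
    intro r _
    simp only [Matrix.toBlocks₂₂, Matrix.of_apply, hN, Matrix.submatrix_apply]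
    rw [hentry]
    simp only [blockEquiv_inr]
    rw [if_neg (by omega : ¬ (k + (r:ℕ) < k)),
      if_neg (by omega : ¬ (k + (r:ℕ) + 1 = k + (r:ℕ))), hf1]
    simp
  calc N.det = (Matrix.fromBlocks N.toBlocks₁₁ N.toBlocks₁₂ N.toBlocks₂₁ N.toBlocks₂₂).det := by
        rw [Matrix.fromBlocks_toBlocks]
    _ = N.toBlocks₁₁.det * N.toBlocks₂₂.det := by
        rw [h21, Matrix.det_fromBlocks_zero₂₁]
    _ = Pf f k := by rw [h11, h22det, mul_one]; rfl

lemma Pf_zero (f : ℕ → ℕ → ℂ) : Pf f 0 = 1 := by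
  simp [Pf, Matrix.charpoly]

lemma rec_P (f : ℕ → ℕ → ℂ) (hf1 : ∀ i, f (i+1) i = -1)
    (hf2 : ∀ i j, j+1 < i → f i j = 0) (m : ℕ) :
    Pf f (m+1) = X * Pf f m
      - ∑ i ∈ Finset.range (m+1), C ((-1:ℂ)^(i+m) * f i m) * Pf f i := by
  have hdet := Matrix.det_succ_column
    (charmatrix (Matrix.of fun a b : Fin (m+1) => f a b)) (Fin.last m)
  simp only [Fin.succAbove_last] at hdet
  have hlhs : Pf f (m+1)
      = ∑ i : Fin (m+1), (-1)^((i:ℕ)+m)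
          * ((if (i:ℕ) = m then X else 0) - C (f i m)) * Pf f i := by
    rw [show Pf f (m+1) = (charmatrix (Matrix.of fun a b : Fin (m+1) => f a b)).det from rfl,
      hdet]
    refine Finset.sum_congr rfl fun i _ => ?_
    rw [minor_det f hf1 hf2 m i, charm]
    norm_num
  rw [hlhs, Fin.sum_univ_eq_sum_range
    (fun i => (-1)^(i+m) * ((if i = m then X else 0) - C (f i m)) * Pf f i) (m+1)]
  rw [Finset.sum_range_succ, Finset.sum_range_succ]
  have hpow : ((-1 : Polynomial ℂ))^(m+m) = 1 := by
    rw [← two_mul, pow_mul]; norm_num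
  have hpowC : ((-1 : ℂ))^(m+m) = 1 := by
    rw [← two_mul, pow_mul]; norm_num
  rw [if_pos rfl, hpow, hpowC]
  have hsum : ∑ i ∈ Finset.range m,
      (-1)^(i+m) * ((if i = m then X else 0) - C (f i m)) * Pf f i
      = -∑ i ∈ Finset.range m, C ((-1:ℂ)^(i+m) * f i m) * Pf f i := by
    rw [← Finset.sum_neg_distrib]
    refine Finset.sum_congr rfl fun i hi => ?_
    rw [if_neg (Finset.mem_range.mp hi).ne, _root_.map_mul, map_pow, map_neg, Polynomial.C_1]
    ring
  rw [hsum]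
  rw [show (1 : ℂ) * f m m = f m m from one_mul _]
  ring


lemma rep_ex (Q : ℕ → Polynomial ℂ) (hQ : ∀ i, (Q i).Monic ∧ (Q i).natDegree = i) :
    ∀ (m : ℕ) (r : Polynomial ℂ), r.degree < (m : ℕ) →
      ∃ a : ℕ → ℂ, r = ∑ i ∈ Finset.range m, C (a i) * Q i := by
  intro m
  induction m with
  | zero =>
    intro r hr
    refine ⟨0, ?_⟩
    have : r = 0 := by
      by_contra h
      rw [Polynomial.degree_eq_natDegree h] at hr
      exact absurd hr (by simp)
    simp [this]
  | succ m ih =>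
    intro r hr
    set c := r.coeff m with hc
    have hdeg : (r - C c * Q m).degree < (m : ℕ) := by
      rw [Polynomial.degree_lt_iff_coeff_zero]
      intro k hk
      obtain ⟨hQm, hQd⟩ := hQ m
      rw [Polynomial.coeff_sub, Polynomial.coeff_C_mul]
      rcases eq_or_lt_of_le hk with h|h
      · have h1 : (Q m).coeff m = 1 := by
          have := hQm.coeff_natDegree
          rwa [hQd] at this
        rw [← h, h1, mul_one, ← hc, sub_self]
      · have h2 : r.coeff k = 0 := Polynomial.coeff_eq_zero_of_degree_lt
          (lt_of_lt_of_le hr (by exact_mod_cast h))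
        have h3 : (Q m).coeff k = 0 := Polynomial.coeff_eq_zero_of_natDegree_lt (by omega)
        rw [h2, h3, mul_zero, sub_self]
    obtain ⟨a, ha⟩ := ih _ hdeg
    refine ⟨Function.update a m c, ?_⟩
    rw [Finset.sum_range_succ, Function.update_self]
    have heq : ∑ i ∈ Finset.range m, C (Function.update a m c i) * Q i
        = ∑ i ∈ Finset.range m, C (a i) * Q i :=
      Finset.sum_congr rfl fun i hi => by
        rw [Function.update_of_ne (Finset.mem_range.mp hi).ne]
    rw [heq, ← ha]
    ring

lemma rep_zero (Q : ℕ → Polynomial ℂ) (hQ : ∀ i, (Q i).Monic ∧ (Q i).natDegree = i) :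
    ∀ (m : ℕ) (a : ℕ → ℂ), (∑ i ∈ Finset.range m, C (a i) * Q i) = 0 →
      ∀ i < m, a i = 0 := by
  intro m
  induction m with
  | zero => intro a _ i hi; omega
  | succ m ih =>
    intro a h
    have ham : a m = 0 := by
      have hco := congrArg (fun p => Polynomial.coeff p m) h
      simp only [Polynomial.finset_sum_coeff, Polynomial.coeff_C_mul,
        Polynomial.coeff_zero] at hco
      rw [Finset.sum_range_succ] at hco
      have h1 : (Q m).coeff m = 1 := by
        have := (hQ m).1.coeff_natDegree
        rwa [(hQ m).2] at this
      have h2 : ∀ i ∈ Finset.range m, a i * (Q i).coeff m = 0 := by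
        intro i hi
        rw [Polynomial.coeff_eq_zero_of_natDegree_lt
          (by rw [(hQ i).2]; exact Finset.mem_range.mp hi), mul_zero]
      rw [Finset.sum_eq_zero h2, zero_add, h1, mul_one] at hco
      exact hco
    have h' : ∑ i ∈ Finset.range m, C (a i) * Q i = 0 := by
      rw [Finset.sum_range_succ, ham] at h
      simpa using h
    intro i hi
    rcases Nat.lt_succ_iff_lt_or_eq.mp hi with h''|h''
    · exact ih a h' i h''
    · rw [h'']; exact ham

lemma rep_eq (Q : ℕ → Polynomial ℂ) (hQ : ∀ i, (Q i).Monic ∧ (Q i).natDegree = i)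
    (m : ℕ) (a b : ℕ → ℂ)
    (h : ∑ i ∈ Finset.range m, C (a i) * Q i = ∑ i ∈ Finset.range m, C (b i) * Q i) :
    ∀ i < m, a i = b i := by
  have h0 : ∑ i ∈ Finset.range m, C ((a - b) i) * Q i = 0 := by
    simp only [Pi.sub_apply, map_sub, sub_mul, Finset.sum_sub_distrib]
    rw [h, sub_self]
  intro i hi
  have := rep_zero Q hQ m (a - b) h0 i hi
  simpa [sub_eq_zero] using this

lemma neg_one_sq_pow (k : ℕ) : ((-1:ℂ))^k * ((-1:ℂ))^k = 1 := by
  rw [← pow_add, ← two_mul, pow_mul]; norm_num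

theorem key (Q : ℕ → Polynomial ℂ) (hQ : ∀ i, (Q i).Monic ∧ (Q i).natDegree = i) :
    ∃ f : ℕ → ℕ → ℂ, (∀ i, f (i+1) i = -1) ∧ (∀ i j, j+1 < i → f i j = 0) ∧
      (∀ m, Pf f m = Q m) ∧
      (∀ g : ℕ → ℕ → ℂ, (∀ i, g (i+1) i = -1) → (∀ i j, j+1 < i → g i j = 0) →
        ∀ N : ℕ, (∀ m ≤ N, Pf g m = Q m) →
        ∀ i j, i ≤ j → j + 1 ≤ N → g i j = f i j) := by
  have hQ0 : Q 0 = 1 := ((hQ 0).1.natDegree_eq_zero).mp (hQ 0).2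
  have hdeg : ∀ j : ℕ, (X * Q j - Q (j+1)).degree < (((j+1 : ℕ) : ℕ) : WithBot ℕ) := by
    intro j
    have h1 : (X * Q j).Monic := monic_X.mul (hQ j).1
    have hd1 : (X * Q j).natDegree = j + 1 := by
      rw [monic_X.natDegree_mul (hQ j).1, natDegree_X, (hQ j).2, add_comm]
    have hdd : (X * Q j).degree = (Q (j+1)).degree := by
      rw [degree_eq_natDegree h1.ne_zero, degree_eq_natDegree (hQ (j+1)).1.ne_zero,
        hd1, (hQ (j+1)).2]
    have hlc : (X * Q j).leadingCoeff = (Q (j+1)).leadingCoeff := by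
      rw [h1.leadingCoeff, (hQ (j+1)).1.leadingCoeff]
    have hlt := Polynomial.degree_sub_lt hdd h1.ne_zero hlc
    rwa [degree_eq_natDegree h1.ne_zero, hd1] at hlt
  have hex : ∀ j : ℕ, ∃ a : ℕ → ℂ,
      X * Q j - Q (j+1) = ∑ i ∈ Finset.range (j+1), C (a i) * Q i :=
    fun j => rep_ex Q hQ (j+1) _ (hdeg j)
  choose a ha using hex
  set F : ℕ → ℕ → ℂ :=
    fun i j => if i = j+1 then -1 else if j+1 < i then 0 else (-1:ℂ)^(i+j) * a j i with hF
  have hF1 : ∀ i, F (i+1) i = -1 := fun i => if_pos rfl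
  have hF2 : ∀ i j, j+1 < i → F i j = 0 := by
    intro i j h
    rw [hF]
    simp only
    rw [if_neg (by omega), if_pos h]
  have hFval : ∀ i j, i ≤ j → F i j = (-1:ℂ)^(i+j) * a j i := by
    intro i j h
    rw [hF]
    simp only
    rw [if_neg (by omega), if_neg (by omega)]
  have hPQ : ∀ m, Pf F m = Q m := by
    intro m
    induction m using Nat.strong_induction_on with
    | _ m ih =>
      match m with
      | 0 => rw [Pf_zero, hQ0]
      | Nat.succ m =>
        rw [rec_P F hF1 hF2 m, ih m (by omega)]
        have hs : ∑ i ∈ Finset.range (m+1), C ((-1:ℂ)^(i+m) * F i m) * Pf F i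
            = ∑ i ∈ Finset.range (m+1), C (a m i) * Q i := by
          refine Finset.sum_congr rfl fun i hi => ?_
          have him : i ≤ m := by have := Finset.mem_range.mp hi; omega
          rw [hFval i m him, ih i (by omega), ← mul_assoc, neg_one_sq_pow, one_mul]
        rw [hs, ← ha m]
        ring
  refine ⟨F, hF1, hF2, hPQ, ?_⟩
  intro g hg1 hg2 N hgQ i j hij hjN
  have hrec := rec_P g hg1 hg2 j
  rw [hgQ (j+1) hjN, hgQ j (by omega)] at hrec
  have hs : ∑ i ∈ Finset.range (j+1), C ((-1:ℂ)^(i+j) * g i j) * Pf g i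
      = ∑ i ∈ Finset.range (j+1), C ((-1:ℂ)^(i+j) * g i j) * Q i := by
    refine Finset.sum_congr rfl fun i hi => ?_
    have := Finset.mem_range.mp hi
    rw [hgQ i (by omega)]
  rw [hs] at hrec
  have heq : ∑ i ∈ Finset.range (j+1), C ((-1:ℂ)^(i+j) * g i j) * Q i
      = ∑ i ∈ Finset.range (j+1), C (a j i) * Q i := by
    rw [← ha j]
    rw [eq_sub_iff_add_eq] at hrec
    rw [eq_sub_iff_add_eq, ← hrec]
    ring
  have := rep_eq Q hQ (j+1) _ _ heq i (by omega)
  rw [hFval i j hij, ← this, ← mul_assoc, neg_one_sq_pow, one_mul]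


/-- Given arbitrary monic polynomials `q m` of degree `m` for `1 ≤ m ≤ n`,
there is a unique `x ∈ e + b` whose cutoff characteristic polynomials are the `q m`. -/
theorem stmt2 (n : ℕ) (hn : 0 < n) (q : ℕ → Polynomial ℂ)
    (hq : ∀ m : ℕ, 1 ≤ m → m ≤ n → (q m).Monic ∧ (q m).natDegree = m) :
    ∃! x : Matrix (Fin n) (Fin n) ℂ, InEB x ∧
      ∀ (m : ℕ) (_ : 1 ≤ m) (hm : m ≤ n), (cutoff x hm).charpoly = q m := by
  set Q : ℕ → Polynomial ℂ := fun m => if 1 ≤ m ∧ m ≤ n then q m else X^m with hQdef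
  have hQ : ∀ i, (Q i).Monic ∧ (Q i).natDegree = i := by
    intro i
    rw [hQdef]
    by_cases h : 1 ≤ i ∧ i ≤ n
    · simp only [if_pos h]; exact hq i h.1 h.2
    · simp only [if_neg h]; exact ⟨monic_X_pow i, natDegree_X_pow i⟩
  have hQq : ∀ m, 1 ≤ m → m ≤ n → Q m = q m := by
    intro m h1 h2; rw [hQdef]; exact if_pos (And.intro h1 h2)
  obtain ⟨f, hf1, hf2, hfQ, huniq⟩ := key Q hQ
  set x : Matrix (Fin n) (Fin n) ℂ := Matrix.of fun i j : Fin n => f i.1 j.1 with hx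
  have hcut : ∀ (m : ℕ) (hm : m ≤ n), cutoff x hm = Matrix.of fun i j : Fin m => f i.1 j.1 := by
    intro m hm; ext i j; rfl
  refine ⟨x, ⟨⟨?_, ?_⟩, ?_⟩, ?_⟩
  · intro i j hij
    show f i.1 j.1 = -1
    rw [hij]; exact hf1 j.1
  · intro i j hij
    exact hf2 i.1 j.1 hij
  · intro m h1 hm
    rw [hcut m hm]
    rw [show (Matrix.of fun i j : Fin m => f i.1 j.1).charpoly = Pf f m from rfl, hfQ m,
      hQq m h1 hm]
  · rintro y ⟨⟨hy1, hy2⟩, hycp⟩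
    set g : ℕ → ℕ → ℂ := fun i j =>
      if h : i < n ∧ j < n then y ⟨i, h.1⟩ ⟨j, h.2⟩ else if i = j+1 then -1 else 0 with hg
    have hg1 : ∀ i, g (i+1) i = -1 := by
      intro i
      rw [hg]
      by_cases h : i+1 < n ∧ i < n
      · simp only [dif_pos h]; exact hy1 ⟨i+1, h.1⟩ ⟨i, h.2⟩ rfl
      · simp only [dif_neg h]; norm_num
    have hg2 : ∀ i j, j+1 < i → g i j = 0 := by
      intro i j hij
      rw [hg]
      by_cases h : i < n ∧ j < n
      · simp only [dif_pos h]; exact hy2 ⟨i, h.1⟩ ⟨j, h.2⟩ hij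
      · simp only [dif_neg h]
        rw [if_neg (show ¬ i = j + 1 by omega)]
    have hgcut : ∀ (m : ℕ) (hm : m ≤ n),
        cutoff y hm = Matrix.of fun i j : Fin m => g i.1 j.1 := by
      intro m hm
      ext i j
      have hi : i.1 < n := lt_of_lt_of_le i.isLt hm
      have hj : j.1 < n := lt_of_lt_of_le j.isLt hm
      show y (Fin.castLE hm i) (Fin.castLE hm j) = g i.1 j.1
      simp only [hg]
      rw [dif_pos (And.intro hi hj)]
      rfl
    have hgQ : ∀ m ≤ n, Pf g m = Q m := by
      intro m hm
      match m with
      | 0 => rw [Pf_zero]; rw [hQdef]; norm_num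
      | Nat.succ m =>
        rw [show Pf g (m+1) = (Matrix.of fun i j : Fin (m+1) => g i.1 j.1).charpoly from rfl,
          ← hgcut (m+1) hm, hycp (m+1) (by omega) hm, hQq (m+1) (by omega) hm]
    have hgf : ∀ i j : ℕ, i ≤ j → j + 1 ≤ n → g i j = f i j :=
      fun i j hij hjn => huniq g hg1 hg2 n hgQ i j hij hjn
    ext i j
    show y i j = f i.1 j.1
    have hyg : y i j = g i.1 j.1 := by
      simp only [hg]
      rw [dif_pos (And.intro i.isLt j.isLt)]
    rcases lt_trichotomy i.1 (j.1+1) with h|h|h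
    · rw [hyg, hgf i.1 j.1 (by omega) (by omega)]
    · rw [hy1 i j h, h]
      exact (hf1 j.1).symm
    · rw [hy2 i j h, hf2 i.1 j.1 h]
end
end

section
/- Let x ∈ M(n). Then x is strongly regular if and only if the d(n) matrices obtained by embedding the powers (x_m)^{m−k} of the cutoffs into M(n) (extending the m×m block by zeros), over all m ∈ {1,...,n} and k ∈ {1,...,m}, are linearly independent in M(n). Here (x_m)^0 = Id_m. -/
open Matrix Polynomial

noncomputable section

attribute [local instance] Matrix.normedAddCommGroup Matrix.normedSpace

/-!
By Jacobi's formula, the derivative of the `k`-th coefficient of `χ(x_m)` in the direction `h`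
is `-tr(h_m B_k)`, where `adj(X - x_m) = ∑ₖ B_k Xᵏ`. As the trace pairing is nondegenerate, `x` is
strongly regular iff the zero-extended matrices `B_k(x_m)` are linearly independent. Comparing
coefficients in `(X - x_m) adj(X - x_m) = χ(x_m)` shows `B_{m-1-e} = (x_m)^e + (lower powers)`
because `χ(x_m)` is monic; hence for each `m` the `B_k(x_m)` span the same space as the powers
`(x_m)^e`, `e < m`, and the two families of `d(n)` matrices have the same span.
-/

lemma range_fin_eq_image_Iio {α : Type*} (M : ℕ) (f : ℕ → α) :
    Set.range (fun k : Fin M => f k) = f '' Set.Iio M := by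
  rw [← Fin.range_val, ← Set.range_comp]
  rfl

lemma range_fin_rev_eq_image_Iio {α : Type*} (m : ℕ) (f : ℕ → α) :
    Set.range (fun k : Fin (m + 1) => f (m - k)) = f '' Set.Iio (m + 1) := by
  rw [← range_fin_eq_image_Iio, ← Fin.rev_surjective.range_comp]
  congr! with k
  simp only [Function.comp_apply, Fin.val_rev]
  congr 1
  omega

section LinearAlgebra

variable {K V : Type*} [Field K] [AddCommGroup V] [Module K V]

theorem LinearMap.surjective_iff_linearIndependent_proj_comp {I : Type*} [Fintype I]
    (L : V →ₗ[K] I → K) :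
    Function.Surjective L ↔ LinearIndependent K (fun i => LinearMap.proj i ∘ₗ L) := by
  classical
  rw [← LinearMap.dualMap_injective_iff, injective_iff_map_eq_zero, Fintype.linearIndependent_iff]
  constructor
  · intro h c hc i
    have hφ := h (∑ j, c j • LinearMap.proj j) (LinearMap.ext fun v => by
      simpa using LinearMap.congr_fun hc v)
    simpa [Pi.single_apply] using LinearMap.congr_fun hφ (Pi.single i 1)
  · intro h φ hφ
    have hφ_eq : φ = ∑ i, φ (Pi.single i 1) • LinearMap.proj i := by
      ext i
      simp [Pi.single_apply]
    have hc := h (fun i => φ (Pi.single i 1)) (by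
      rw [← hφ]
      ext v
      conv_rhs => rw [LinearMap.dualMap_apply, hφ_eq]
      simp)
    ext i
    exact hc i

theorem linearIndependent_iff_of_span_range_eq {ι : Type*} [Fintype ι] {v w : ι → V}
    (h : Submodule.span K (Set.range v) = Submodule.span K (Set.range w)) :
    LinearIndependent K v ↔ LinearIndependent K w := by
  rw [linearIndependent_iff_card_eq_finrank_span, linearIndependent_iff_card_eq_finrank_span,
    Set.finrank, Set.finrank, h]

end LinearAlgebra

theorem MultilinearMap.continuous_of_finiteDimensional {𝕜 ι F : Type*}
    [NontriviallyNormedField 𝕜] [CompleteSpace 𝕜] [Fintype ι] {E : ι → Type*}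
    [∀ i, NormedAddCommGroup (E i)] [∀ i, NormedSpace 𝕜 (E i)]
    [∀ i, FiniteDimensional 𝕜 (E i)] [NormedAddCommGroup F] [NormedSpace 𝕜 F]
    (f : MultilinearMap 𝕜 E F) : Continuous f := by
  classical
  let b := fun i => Module.finBasis 𝕜 (E i)
  have hf : ⇑f = fun x => ∑ r : ∀ i, Fin (Module.finrank 𝕜 (E i)),
      (∏ i, (b i).coord (r i) (x i)) • f fun i => b i (r i) := by
    funext x
    conv_lhs => rw [← funext fun i => (b i).sum_repr (x i)]
    rw [f.map_sum]
    exact Finset.sum_congr rfl fun r _ => f.map_smul_univ _ _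
  rw [hf]
  refine continuous_finsetSum _ fun r _ => Continuous.smul ?_ continuous_const
  exact continuous_finsetProd _ fun i _ =>
    ((b i).coord (r i)).continuous_of_finiteDimensional.comp (continuous_apply i)

namespace Matrix

section TraceDual

variable {ι K : Type*} [Fintype ι] [Field K]

def traceMulDual : Matrix ι ι K →ₗ[K] Module.Dual K (Matrix ι ι K) :=
  (LinearMap.mul K (Matrix ι ι K)).flip.compr₂ (traceLinearMap ι K K)

@[simp]
lemma traceMulDual_apply (A h : Matrix ι ι K) : traceMulDual A h = trace (h * A) := rfl

lemma ker_traceMulDual : LinearMap.ker (traceMulDual : Matrix ι ι K →ₗ[K] _) = ⊥ := by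
  refine LinearMap.ker_eq_bot'.2 fun A hA => ext_iff_trace_mul_left.2 fun h => ?_
  simpa using LinearMap.congr_fun hA h

end TraceDual

section AdjugateCharmatrix

variable {ι R : Type*} [Fintype ι] [DecidableEq ι] [CommRing R] (y : Matrix ι ι R)

def adjCharmatrixCoeff (k : ℕ) : Matrix ι ι R :=
  (matPolyEquiv (adjugate (charmatrix y))).coeff k

lemma adjCharmatrixCoeff_apply (k : ℕ) (i j : ι) :
    y.adjCharmatrixCoeff k i j = (adjugate (charmatrix y) i j).coeff k := by
  simp [adjCharmatrixCoeff, matPolyEquiv_coeff_apply]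

/-- Compare the coefficients of `X^(k+1)` in `(X - y) * adj (X - y) = χ_y(X)`. -/
lemma adjCharmatrixCoeff_eq_mul_add (k : ℕ) :
    y.adjCharmatrixCoeff k = y * y.adjCharmatrixCoeff (k + 1) + y.charpoly.coeff (k + 1) • 1 := by
  have H := congrArg (fun q => (matPolyEquiv q).coeff (k + 1)) (mul_adjugate (charmatrix y))
  simp only [_root_.map_mul, matPolyEquiv_charmatrix, matPolyEquiv_smul_one, sub_mul,
    coeff_sub, coeff_X_mul, coeff_C_mul, coeff_map, Algebra.algebraMap_eq_smul_one] at H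
  exact sub_eq_iff_eq_add'.mp H

variable [Nontrivial R]

lemma adjCharmatrixCoeff_eq_sum (k : ℕ) :
    y.adjCharmatrixCoeff k =
      ∑ j ∈ Finset.range (Fintype.card ι - k), y.charpoly.coeff (k + 1 + j) • y ^ j := by
  set n := Fintype.card ι
  set N := (matPolyEquiv (adjugate (charmatrix y))).natDegree
  -- downward induction on `k`, starting beyond the degree of `adj (X - y)`
  suffices ∀ i k, N + n + 1 ≤ k + i → y.adjCharmatrixCoeff k =
      ∑ j ∈ Finset.range (n - k), y.charpoly.coeff (k + 1 + j) • y ^ j from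
    this (N + n + 1) k (by omega)
  intro i
  induction i with
  | zero =>
    intro k hk
    rw [show n - k = 0 by omega, Finset.sum_range_zero]
    exact coeff_eq_zero_of_natDegree_lt (by omega)
  | succ i ih =>
    intro k hk
    rw [adjCharmatrixCoeff_eq_mul_add, ih (k + 1) (by omega), Finset.mul_sum]
    rcases lt_or_ge k n with hkn | hkn
    · rw [show n - k = n - (k + 1) + 1 by omega, Finset.sum_range_succ']
      simp only [mul_smul_comm, ← pow_succ', add_zero, pow_zero]
      congr 2 with j
      rw [show k + 1 + 1 + j = k + 1 + (j + 1) by omega]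
    · have hc : y.charpoly.coeff (k + 1) = 0 :=
        coeff_eq_zero_of_natDegree_lt (by rw [charpoly_natDegree_eq_dim]; omega)
      simp [show n - k = 0 by omega, show n - (k + 1) = 0 by omega, hc]

lemma adjCharmatrixCoeff_mem_span_pow (k : ℕ) :
    y.adjCharmatrixCoeff k ∈ Submodule.span R ((y ^ ·) '' Set.Iio (Fintype.card ι)) := by
  rw [adjCharmatrixCoeff_eq_sum]
  refine Submodule.sum_mem _ fun j hj => Submodule.smul_mem _ _ (Submodule.subset_span ?_)
  exact ⟨j, by simp only [Finset.mem_range] at hj; simp only [Set.mem_Iio]; omega, rfl⟩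

/-- `adjCharmatrixCoeff y (n - 1 - e)` is `y ^ e` plus lower powers, since `χ_y` is monic. -/
lemma pow_mem_span_adjCharmatrixCoeff {e : ℕ} (he : e < Fintype.card ι) :
    y ^ e ∈ Submodule.span R (y.adjCharmatrixCoeff '' Set.Iio (Fintype.card ι)) := by
  set n := Fintype.card ι
  induction e using Nat.strong_induction_on with
  | _ e ih =>
  have hB : y.adjCharmatrixCoeff (n - 1 - e) =
      ∑ j ∈ Finset.range e, y.charpoly.coeff (n - 1 - e + 1 + j) • y ^ j + y ^ e := by
    rw [adjCharmatrixCoeff_eq_sum, show n - (n - 1 - e) = e + 1 by omega, Finset.sum_range_succ,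
      show n - 1 - e + 1 + e = n by omega]
    simpa using congrArg (· • y ^ e) (charpoly_monic y).coeff_natDegree
  rw [eq_sub_of_add_eq' hB.symm]
  refine Submodule.sub_mem _ (Submodule.subset_span ⟨n - 1 - e, by simp; omega, rfl⟩) ?_
  refine Submodule.sum_mem _ fun j hj => Submodule.smul_mem _ _ ?_
  simp only [Finset.mem_range] at hj
  exact ih j hj (by omega)

lemma span_adjCharmatrixCoeff_eq_span_pow :
    Submodule.span R (y.adjCharmatrixCoeff '' Set.Iio (Fintype.card ι)) =
      Submodule.span R ((y ^ ·) '' Set.Iio (Fintype.card ι)) := by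
  apply le_antisymm <;> rw [Submodule.span_le] <;> rintro _ ⟨k, hk, rfl⟩
  · exact y.adjCharmatrixCoeff_mem_span_pow k
  · exact y.pow_mem_span_adjCharmatrixCoeff hk

end AdjugateCharmatrix

theorem det_updateRow_eq_sum_mul_adjugate {ι R : Type*} [Fintype ι] [DecidableEq ι] [CommRing R]
    (A : Matrix ι ι R) (i : ι) (v : ι → R) :
    (A.updateRow i v).det = ∑ j, v j * adjugate A j i := by
  rw [← det_transpose, ← updateCol_transpose, ← cramer_apply, cramer_eq_adjugate_mulVec,
    ← adjugate_transpose]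
  simp [mulVec, dotProduct, mul_comm]

section Pencil

variable {ι R : Type*} [Fintype ι] [DecidableEq ι] [CommRing R]

/-- `(a, b) ↦ a + b X`: a matrix of pairs encodes a linear matrix pencil. -/
def pairToLinearPoly : R × R →ₗ[R] R[X] :=
  (monomial 0).comp (LinearMap.fst R R R) + (monomial 1).comp (LinearMap.snd R R R)

lemma pairToLinearPoly_apply (q : R × R) : pairToLinearPoly q = C q.1 + C q.2 * X := by
  simp [pairToLinearPoly, C_mul_X_eq_monomial]

def charmatrixPairs (z : Matrix ι ι R) : ι → ι → R × R :=
  fun i j => (-z i j, (1 : Matrix ι ι R) i j)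

lemma of_pairToLinearPoly_charmatrixPairs (z : Matrix ι ι R) :
    of (fun i j => pairToLinearPoly (charmatrixPairs z i j)) = charmatrix z := by
  ext i j
  by_cases hij : i = j
  · subst hij; simp [charmatrixPairs, pairToLinearPoly_apply, charmatrix_apply_eq]; ring
  · simp [charmatrixPairs, pairToLinearPoly_apply, hij]

end Pencil

section CharpolyDeriv

variable {ι 𝕜 : Type*} [Fintype ι] [DecidableEq ι] [NontriviallyNormedField 𝕜] [CompleteSpace 𝕜]

variable (ι) in
def pencilDetCoeff (k : ℕ) : ContinuousMultilinearMap 𝕜 (fun _ : ι => ι → 𝕜 × 𝕜) 𝕜 where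
  toMultilinearMap :=
    ((lcoeff 𝕜 k).compMultilinearMap
      ((detRowAlternating : (ι → 𝕜[X]) [⋀^ι]→ₗ[𝕜[X]] 𝕜[X]).toMultilinearMap.restrictScalars 𝕜)
      ).compLinearMap
      fun _ => LinearMap.pi fun j => pairToLinearPoly.comp (LinearMap.proj j)
  cont := MultilinearMap.continuous_of_finiteDimensional _

lemma pencilDetCoeff_apply (k : ℕ) (v : ι → ι → 𝕜 × 𝕜) :
    pencilDetCoeff ι k v = (det (of fun i j => pairToLinearPoly (v i j))).coeff k := rfl

variable (ι 𝕜) in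
def negPairs : Matrix ι ι 𝕜 →L[𝕜] (ι → ι → 𝕜 × 𝕜) :=
  LinearMap.toContinuousLinearMap
    (LinearMap.pi fun i => LinearMap.pi fun j =>
      -(LinearMap.inl 𝕜 𝕜 𝕜 ∘ₗ entryLinearMap 𝕜 𝕜 i j))

lemma hasFDerivAt_charmatrixPairs (y : Matrix ι ι 𝕜) :
    HasFDerivAt charmatrixPairs (negPairs ι 𝕜) y := by
  have h : charmatrixPairs = fun z => negPairs ι 𝕜 z + charmatrixPairs (0 : Matrix ι ι 𝕜) := by
    funext z i j
    simp [charmatrixPairs, negPairs]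
  rw [h]
  exact (negPairs ι 𝕜).hasFDerivAt.add_const _

/-- Expanding each determinant along its perturbed row (Jacobi's formula). -/
lemma linearDeriv_pencilDetCoeff (y h : Matrix ι ι 𝕜) (k : ℕ) :
    (pencilDetCoeff ι k).linearDeriv (charmatrixPairs y) (negPairs ι 𝕜 h) =
      -trace (h * y.adjCharmatrixCoeff k) := by
  rw [ContinuousMultilinearMap.linearDeriv_apply, trace, ← Finset.sum_neg_distrib]
  refine Finset.sum_congr rfl fun i _ => ?_
  have hrow : of (fun a b => pairToLinearPoly
      (Function.update (charmatrixPairs y) i (negPairs ι 𝕜 h i) a b)) =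
      (charmatrix y).updateRow i fun j => -C (h i j) := by
    rw [← of_pairToLinearPoly_charmatrixPairs]
    ext a b
    rcases eq_or_ne a i with rfl | hai
    · simp [negPairs, pairToLinearPoly_apply]
    · simp [hai]
  rw [pencilDetCoeff_apply, hrow, det_updateRow_eq_sum_mul_adjugate, finsetSum_coeff,
    diag_apply, mul_apply, ← Finset.sum_neg_distrib]
  simp [adjCharmatrixCoeff_apply, coeff_C_mul]

theorem hasFDerivAt_charpoly_coeff (y : Matrix ι ι 𝕜) (k : ℕ) :
    HasFDerivAt (fun z : Matrix ι ι 𝕜 => z.charpoly.coeff k)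
      (-LinearMap.toContinuousLinearMap (traceMulDual (y.adjCharmatrixCoeff k))) y := by
  have hf : (fun z : Matrix ι ι 𝕜 => z.charpoly.coeff k) =
      pencilDetCoeff ι k ∘ charmatrixPairs := by
    funext z
    simp [pencilDetCoeff_apply, of_pairToLinearPoly_charmatrixPairs, charpoly]
  rw [hf]
  have hdet := (pencilDetCoeff ι k).hasFDerivAt (charmatrixPairs y)
  refine (hdet.comp y (hasFDerivAt_charmatrixPairs y)).congr_fderiv
    (ContinuousLinearMap.ext fun h => ?_)
  exact linearDeriv_pencilDetCoeff y h k

end CharpolyDeriv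

end Matrix

section Cutoff

variable {n m : ℕ}

def cutoffCLM (hmn : m ≤ n) : Matrix (Fin n) (Fin n) ℂ →L[ℂ] Matrix (Fin m) (Fin m) ℂ :=
  LinearMap.toContinuousLinearMap
    { toFun := fun z => cutoff z hmn
      map_add' := fun _ _ => rfl
      map_smul' := fun _ _ => rfl }

def embedLinearMap (hmn : m ≤ n) : Matrix (Fin m) (Fin m) ℂ →ₗ[ℂ] Matrix (Fin n) (Fin n) ℂ where
  toFun := embed hmn
  map_add' a b := by
    ext i j
    by_cases hi : i.1 < m <;> by_cases hj : j.1 < m <;> simp [embed, hi, hj]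
  map_smul' c a := by
    ext i j
    by_cases hi : i.1 < m <;> by_cases hj : j.1 < m <;> simp [embed, hi, hj]

lemma embed_castLE (hmn : m ≤ n) (B : Matrix (Fin m) (Fin m) ℂ) (i j : Fin m) :
    embed hmn B (Fin.castLE hmn i) (Fin.castLE hmn j) = B i j := by
  simp [embed]

lemma embed_eq_zero_of_notMem_range (hmn : m ≤ n) (B : Matrix (Fin m) (Fin m) ℂ) {i j : Fin n}
    (h : i ∉ Set.range (Fin.castLE hmn) ∨ j ∉ Set.range (Fin.castLE hmn)) :
    embed hmn B i j = 0 := by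
  simp only [Fin.range_castLE, Set.mem_ofPred_eq] at h
  rcases h with h | h <;> simp [embed, h]

lemma trace_mul_embed (hmn : m ≤ n) (z : Matrix (Fin n) (Fin n) ℂ)
    (B : Matrix (Fin m) (Fin m) ℂ) : trace (z * embed hmn B) = trace (cutoff z hmn * B) := by
  simp only [trace, diag_apply, mul_apply]
  refine (Fintype.sum_of_injective _ (Fin.castLE_injective hmn) _ _ (fun a ha => ?_)
    fun i => ?_).symm
  · exact Finset.sum_eq_zero fun b _ => by
      rw [embed_eq_zero_of_notMem_range hmn B (.inr ha), mul_zero]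
  · refine Fintype.sum_of_injective _ (Fin.castLE_injective hmn) _ _ (fun b hb => ?_) fun j => ?_
    · rw [embed_eq_zero_of_notMem_range hmn B (.inl hb), mul_zero]
    · rw [embed_castLE]; rfl

end Cutoff

section StronglyRegular

variable {n : ℕ}

lemma hasFDerivAt_Phi (x : Matrix (Fin n) (Fin n) ℂ) :
    HasFDerivAt (Phi n) (LinearMap.toContinuousLinearMap (LinearMap.pi
      fun p : Σ m : Fin n, Fin (m.1 + 1) => ((-1 : ℂ) ^ (p.1.1 - p.2.1)) •
        traceMulDual (embed p.1.2 ((cutoff x p.1.2).adjCharmatrixCoeff p.2)))) x := by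
  refine hasFDerivAt_pi'' fun p => ?_
  have hp := ((hasFDerivAt_charpoly_coeff (cutoff x p.1.2) p.2).comp x
    (cutoffCLM p.1.2).hasFDerivAt).const_mul ((-1 : ℂ) ^ (p.1.1 - p.2.1 + 1))
  refine hp.congr_fderiv (ContinuousLinearMap.ext fun h => ?_)
  show (-1 : ℂ) ^ (p.1.1 - p.2.1 + 1) * -trace (cutoff h p.1.2 * _) =
    (-1 : ℂ) ^ (p.1.1 - p.2.1) * trace (h * embed p.1.2 _)
  rw [trace_mul_embed, pow_succ]
  ring

lemma span_embed_adjCharmatrixCoeff_eq_span_embed_pow (x : Matrix (Fin n) (Fin n) ℂ) :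
    Submodule.span ℂ (Set.range fun p : Σ m : Fin n, Fin (m.1 + 1) =>
        embed p.1.2 ((cutoff x p.1.2).adjCharmatrixCoeff p.2)) =
      Submodule.span ℂ (Set.range fun p : Σ m : Fin n, Fin (m.1 + 1) =>
        embed p.1.2 (cutoff x p.1.2 ^ (p.1.1 - p.2.1))) := by
  simp only [Set.range_sigma_eq_iUnion_range, Submodule.span_iUnion]
  refine iSup_congr fun m => ?_
  have hpow := (cutoff x m.2).span_adjCharmatrixCoeff_eq_span_pow
  rw [Fintype.card_fin] at hpow
  have hB :
      (Set.range fun k : Fin (m.1 + 1) => embed m.2 ((cutoff x m.2).adjCharmatrixCoeff k)) =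
      embedLinearMap m.2 '' ((cutoff x m.2).adjCharmatrixCoeff '' Set.Iio (m.1 + 1)) := by
    rw [← Set.image_comp]
    exact range_fin_eq_image_Iio _ (embedLinearMap m.2 ∘ (cutoff x m.2).adjCharmatrixCoeff)
  have hP : (Set.range fun k : Fin (m.1 + 1) => embed m.2 (cutoff x m.2 ^ (m.1 - k))) =
      embedLinearMap m.2 '' ((cutoff x m.2 ^ ·) '' Set.Iio (m.1 + 1)) := by
    rw [← Set.image_comp]
    exact range_fin_rev_eq_image_Iio _ (embedLinearMap m.2 ∘ (cutoff x m.2 ^ ·))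
  rw [hB, hP, Submodule.span_image, Submodule.span_image, hpow]

end StronglyRegular

/-- `x` is strongly regular iff the `d(n)` zero-extended powers `(x_m)^{m-k}`
(`1 ≤ k ≤ m ≤ n`) are linearly independent in `M(n)`. -/
theorem stmt5 (n : ℕ) (x : Matrix (Fin n) (Fin n) ℂ) :
    StronglyRegular x ↔
      LinearIndependent ℂ (fun p : Σ m : Fin n, Fin (m.1 + 1) =>
        embed p.1.2 ((cutoff x p.1.2) ^ (p.1.1 - p.2.1))) := by
  rw [StronglyRegular, (hasFDerivAt_Phi x).fderiv, LinearMap.coe_toContinuousLinearMap',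
    LinearMap.surjective_iff_linearIndependent_proj_comp,
    ← linearIndependent_iff_of_span_range_eq (span_embed_adjCharmatrixCoeff_eq_span_embed_pow x),
    ← LinearMap.linearIndependent_iff (traceMulDual : Matrix (Fin n) (Fin n) ℂ →ₗ[ℂ] _)
      ker_traceMulDual]
  simp only [LinearMap.proj_pi]
  refine Iff.trans ?_ (LinearIndependent.units_smul_iff _ fun p : Σ m : Fin n, Fin (m.1 + 1) =>
    (-1 : ℂˣ) ^ (p.1.1 - p.2.1))
  congr! 2
end
end

section
/- Let x, y ∈ M(n) be Jacobi matrices. Then there exists an invertible diagonal matrix g ∈ GL(n,ℂ) with g x g^{−1} = y if and only if the characteristic polynomial of x_m equals the characteristic polynomial of y_m for every m ∈ {1,...,n}. -/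
open Matrix Polynomial

noncomputable section

attribute [local instance] Matrix.normedAddCommGroup Matrix.normedSpace

lemma eval_charpoly {m : ℕ} (A : Matrix (Fin m) (Fin m) ℂ) (t : ℂ) :
    A.charpoly.eval t = (t • (1 : Matrix (Fin m) (Fin m) ℂ) - A).det := by
  rw [Matrix.charpoly, ← Polynomial.coe_evalRingHom, RingHom.map_det]
  congr 1
  ext i j
  by_cases h : i = j
  · subst h
    simp [Matrix.charmatrix_apply_eq, Matrix.one_apply, Matrix.smul_apply]
  · simp [Matrix.charmatrix_apply_ne _ _ _ h, Matrix.one_apply, h, Matrix.smul_apply]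

lemma det_rec {m : ℕ} (A : Matrix (Fin (m+2)) (Fin (m+2)) ℂ)
    (hrow : ∀ j : Fin (m+2), j.1 < m → A (Fin.last (m+1)) j = 0)
    (hcol : ∀ i : Fin (m+2), i.1 < m → A i (Fin.last (m+1)) = 0) :
    det A = A (Fin.last (m+1)) (Fin.last (m+1)) *
        det (A.submatrix Fin.castSucc Fin.castSucc)
      - A (Fin.last (m+1)) ⟨m, by omega⟩ * A ⟨m, by omega⟩ (Fin.last (m+1)) *
        det (A.submatrix (fun i : Fin m => (⟨i.1, by omega⟩ : Fin (m+2)))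
          (fun j : Fin m => (⟨j.1, by omega⟩ : Fin (m+2)))) := by
  have key : (Fin.last m).castSucc.succAbove (Fin.last m) = Fin.last (m+1) :=
    (Fin.succAbove_of_le_castSucc _ _ le_rfl).trans (Fin.succ_last m)
  have key2 : ∀ i : Fin m, (Fin.last m).castSucc.succAbove i.castSucc = i.castSucc.castSucc :=
    fun i => Fin.succAbove_of_castSucc_lt _ _ (by simp [Fin.lt_def, i.2])
  rw [det_succ_row A (Fin.last (m+1)), Fin.sum_univ_castSucc, Fin.sum_univ_castSucc]
  rw [Finset.sum_eq_zero (fun j _ => by rw [hrow _ (by simpa using j.2)]; ring), zero_add]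
  rw [Fin.succAbove_last]
  have hB : det (A.submatrix Fin.castSucc ((Fin.last m).castSucc.succAbove)) =
      A ⟨m, by omega⟩ (Fin.last (m+1)) *
        det (A.submatrix (fun i : Fin m => (⟨i.1, by omega⟩ : Fin (m+2)))
          (fun j : Fin m => (⟨j.1, by omega⟩ : Fin (m+2)))) := by
    rw [det_succ_column _ (Fin.last m), Fin.sum_univ_castSucc]
    rw [Finset.sum_eq_zero (fun i _ => by
      rw [Matrix.submatrix_apply, key, hcol _ (by simpa using i.2)]; ring), zero_add]
    rw [Matrix.submatrix_apply, key, Fin.succAbove_last, Matrix.submatrix_submatrix]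
    have hfun : ((Fin.last m).castSucc.succAbove ∘ Fin.castSucc : Fin m → Fin (m+2)) =
        (fun j : Fin m => (⟨j.1, by omega⟩ : Fin (m+2))) := by
      funext i; rw [Function.comp_apply, key2]; rfl
    have hfun2 : (Fin.castSucc ∘ Fin.castSucc : Fin m → Fin (m+2)) =
        (fun i : Fin m => (⟨i.1, by omega⟩ : Fin (m+2))) := by
      funext i; rfl
    rw [hfun, hfun2]
    have : Fin.castSucc (Fin.last m) = (⟨m, by omega⟩ : Fin (m+2)) := rfl
    rw [this]
    simp [Fin.val_last]
  rw [hB]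
  have : Fin.castSucc (Fin.last m) = (⟨m, by omega⟩ : Fin (m+2)) := rfl
  rw [this]
  simp only [Fin.val_last, Fin.coe_castSucc]
  have s1 : ((-1:ℂ)) ^ ((m+1) + (m+1)) = 1 := Even.neg_one_pow ⟨m+1, rfl⟩
  have s2 : (-1:ℂ) ^ ((m+1) + m) = -1 := Odd.neg_one_pow ⟨m, by ring⟩
  rw [s1, s2]
  ring

lemma cutoff_rec {n : ℕ} (x : Matrix (Fin n) (Fin n) ℂ)
    (hx0 : ∀ i j : Fin n, (i.1 + 1 < j.1 ∨ j.1 + 1 < i.1) → x i j = 0)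
    {m : ℕ} (h : m + 2 ≤ n) (t : ℂ) :
    (cutoff x h).charpoly.eval t =
      (t - x ⟨m+1, by omega⟩ ⟨m+1, by omega⟩) *
        (cutoff x (show m+1 ≤ n by omega)).charpoly.eval t
      - x ⟨m+1, by omega⟩ ⟨m, by omega⟩ * x ⟨m, by omega⟩ ⟨m+1, by omega⟩ *
        (cutoff x (show m ≤ n by omega)).charpoly.eval t := by
  rw [eval_charpoly, eval_charpoly, eval_charpoly]
  set A := t • (1 : Matrix (Fin (m+2)) (Fin (m+2)) ℂ) - cutoff x h with hA
  have hrow : ∀ j : Fin (m+2), j.1 < m → A (Fin.last (m+1)) j = 0 := by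
    intro j hj
    have hne : Fin.last (m+1) ≠ j := Fin.ne_of_val_ne (by simp only [Fin.val_last]; omega)
    simp only [hA, Matrix.sub_apply, Matrix.smul_apply, Matrix.one_apply_ne hne,
      smul_zero, zero_sub, neg_eq_zero, cutoff, Matrix.of_apply]
    exact hx0 _ _ (Or.inr (by simp only [Fin.coe_castLE, Fin.val_last]; omega))
  have hcol : ∀ i : Fin (m+2), i.1 < m → A i (Fin.last (m+1)) = 0 := by
    intro i hi
    have hne : i ≠ Fin.last (m+1) := Fin.ne_of_val_ne (by simp only [Fin.val_last]; omega)
    simp only [hA, Matrix.sub_apply, Matrix.smul_apply, Matrix.one_apply_ne hne,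
      smul_zero, zero_sub, neg_eq_zero, cutoff, Matrix.of_apply]
    exact hx0 _ _ (Or.inl (by simp only [Fin.coe_castLE, Fin.val_last]; omega))
  rw [det_rec A hrow hcol]
  have hsub1 : A.submatrix Fin.castSucc Fin.castSucc =
      t • (1 : Matrix (Fin (m+1)) (Fin (m+1)) ℂ) - cutoff x (show m+1 ≤ n by omega) := by
    ext i j
    simp only [hA, Matrix.submatrix_apply, Matrix.sub_apply, Matrix.smul_apply,
      Matrix.one_apply, cutoff, Matrix.of_apply]
    congr 1
    · congr 1
      simp [Fin.ext_iff]
  have hsub2 : A.submatrix (fun i : Fin m => (⟨i.1, by omega⟩ : Fin (m+2)))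
      (fun j : Fin m => (⟨j.1, by omega⟩ : Fin (m+2))) =
      t • (1 : Matrix (Fin m) (Fin m) ℂ) - cutoff x (show m ≤ n by omega) := by
    ext i j
    simp only [hA, Matrix.submatrix_apply, Matrix.sub_apply, Matrix.smul_apply,
      Matrix.one_apply, cutoff, Matrix.of_apply]
    congr 1
    · congr 1
      simp [Fin.ext_iff]
  rw [hsub1, hsub2]
  have e1 : A (Fin.last (m+1)) (Fin.last (m+1)) = t - x ⟨m+1, by omega⟩ ⟨m+1, by omega⟩ := by
    simp only [hA, Matrix.sub_apply, Matrix.smul_apply, Matrix.one_apply_eq,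
      smul_eq_mul, mul_one, cutoff, Matrix.of_apply]
    rfl
  have e2 : A (Fin.last (m+1)) ⟨m, by omega⟩ = -(x ⟨m+1, by omega⟩ ⟨m, by omega⟩) := by
    have hne : Fin.last (m+1) ≠ (⟨m, by omega⟩ : Fin (m+2)) := by
      simp [Fin.ext_iff]
    simp only [hA, Matrix.sub_apply, Matrix.smul_apply, Matrix.one_apply_ne hne,
      smul_zero, zero_sub, cutoff, Matrix.of_apply]
    rfl
  have e3 : A ⟨m, by omega⟩ (Fin.last (m+1)) = -(x ⟨m, by omega⟩ ⟨m+1, by omega⟩) := by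
    have hne : (⟨m, by omega⟩ : Fin (m+2)) ≠ Fin.last (m+1) := by
      simp [Fin.ext_iff]
    simp only [hA, Matrix.sub_apply, Matrix.smul_apply, Matrix.one_apply_ne hne,
      smul_zero, zero_sub, cutoff, Matrix.of_apply]
    rfl
  rw [e1, e2, e3]
  ring

lemma trace_cutoff_eq {n : ℕ} (x y : Matrix (Fin n) (Fin n) ℂ)
    (hch : ∀ (m : ℕ) (_ : 1 ≤ m) (hm : m ≤ n),
      (cutoff x hm).charpoly = (cutoff y hm).charpoly)
    (m : ℕ) (hm : m ≤ n) : (cutoff x hm).trace = (cutoff y hm).trace := by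
  rcases Nat.eq_zero_or_pos m with h0 | hpos
  · subst h0
    simp [Matrix.trace]
  · rcases m with _ | m
    · omega
    rw [Matrix.trace_eq_neg_charpoly_coeff, Matrix.trace_eq_neg_charpoly_coeff,
      hch _ hpos hm]

lemma diag_eq {n : ℕ} (x y : Matrix (Fin n) (Fin n) ℂ)
    (hch : ∀ (m : ℕ) (_ : 1 ≤ m) (hm : m ≤ n),
      (cutoff x hm).charpoly = (cutoff y hm).charpoly)
    (k : ℕ) (hk : k < n) : x ⟨k, hk⟩ ⟨k, hk⟩ = y ⟨k, hk⟩ ⟨k, hk⟩ := by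
  have hsplit : ∀ z : Matrix (Fin n) (Fin n) ℂ,
      (cutoff z (show k+1 ≤ n by omega)).trace =
        (cutoff z (show k ≤ n by omega)).trace + z ⟨k, hk⟩ ⟨k, hk⟩ := by
    intro z
    rw [Matrix.trace, Matrix.trace, Fin.sum_univ_castSucc]
    congr 1
  have h1 := trace_cutoff_eq x y hch (k+1) (by omega)
  have h0 := trace_cutoff_eq x y hch k (by omega)
  have hx := hsplit x
  have hy := hsplit y
  rw [hx, hy, h0] at h1
  exact add_left_cancel h1

lemma eval_cutoff_eq {n : ℕ} (x y : Matrix (Fin n) (Fin n) ℂ)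
    (hch : ∀ (m : ℕ) (_ : 1 ≤ m) (hm : m ≤ n),
      (cutoff x hm).charpoly = (cutoff y hm).charpoly)
    (m : ℕ) (hm : m ≤ n) (t : ℂ) :
    (cutoff x hm).charpoly.eval t = (cutoff y hm).charpoly.eval t := by
  rcases Nat.eq_zero_or_pos m with h0 | hpos
  · subst h0
    rw [eval_charpoly, eval_charpoly, Matrix.det_fin_zero, Matrix.det_fin_zero]
  · rw [hch _ hpos hm]

lemma prod_eq {n : ℕ} (x y : Matrix (Fin n) (Fin n) ℂ)
    (hx : IsJacobi x) (hy : IsJacobi y)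
    (hch : ∀ (m : ℕ) (_ : 1 ≤ m) (hm : m ≤ n),
      (cutoff x hm).charpoly = (cutoff y hm).charpoly)
    (k : ℕ) (hk : k + 2 ≤ n) :
    x ⟨k+1, by omega⟩ ⟨k, by omega⟩ * x ⟨k, by omega⟩ ⟨k+1, by omega⟩ =
      y ⟨k+1, by omega⟩ ⟨k, by omega⟩ * y ⟨k, by omega⟩ ⟨k+1, by omega⟩ := by
  have hd := diag_eq x y hch (k+1) (by omega)
  have hkey : ∀ t : ℂ,
      (x ⟨k+1, by omega⟩ ⟨k, by omega⟩ * x ⟨k, by omega⟩ ⟨k+1, by omega⟩) *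
        (cutoff y (show k ≤ n by omega)).charpoly.eval t =
      (y ⟨k+1, by omega⟩ ⟨k, by omega⟩ * y ⟨k, by omega⟩ ⟨k+1, by omega⟩) *
        (cutoff y (show k ≤ n by omega)).charpoly.eval t := by
    intro t
    have r1 := cutoff_rec x hx.1 hk t
    have r2 := cutoff_rec y hy.1 hk t
    have e2 := eval_cutoff_eq x y hch (k+2) hk t
    have e1 := eval_cutoff_eq x y hch (k+1) (by omega) t
    have e0 := eval_cutoff_eq x y hch k (by omega) t
    rw [e2, e1, e0, hd] at r1
    linear_combination r1 - r2
  have hne : ∃ t : ℂ, (cutoff y (show k ≤ n by omega)).charpoly.eval t ≠ 0 := by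
    by_contra hcon
    push_neg at hcon
    exact (Matrix.charpoly_monic _).ne_zero (Polynomial.zero_of_eval_zero _ hcon)
  obtain ⟨t, ht⟩ := hne
  exact mul_right_cancel₀ ht (hkey t)

/-- Two Jacobi matrices are conjugate by an invertible diagonal matrix iff
all of their cutoff characteristic polynomials agree. -/
theorem stmt10 (n : ℕ) (x y : Matrix (Fin n) (Fin n) ℂ)
    (hx : IsJacobi x) (hy : IsJacobi y) :
    (∃ g : Matrix (Fin n) (Fin n) ℂ, IsUnit g ∧ g.IsDiag ∧ g * x * g⁻¹ = y) ↔
      ∀ (m : ℕ) (_ : 1 ≤ m) (hm : m ≤ n),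
        (cutoff x hm).charpoly = (cutoff y hm).charpoly := by
  constructor
  · rintro ⟨g, hu, hdg, hconj⟩
    have hdet : IsUnit g.det := (Matrix.isUnit_iff_isUnit_det g).mp hu
    have hg : g = Matrix.diagonal (fun i => g i i) := (hdg.diagonal_diag).symm
    have hv : ∀ i : Fin n, g i i ≠ 0 := by
      intro i
      have h1 : g.det ≠ 0 := hdet.ne_zero
      rw [hg, Matrix.det_diagonal] at h1
      intro h0
      exact h1 (Finset.prod_eq_zero (Finset.mem_univ i) h0)
    have hgx : g * x = y * g := by
      have h2 : g * x * g⁻¹ * g = y * g := by rw [hconj]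
      rwa [mul_assoc (g * x), Matrix.nonsing_inv_mul g hdet, mul_one] at h2
    have hentry : ∀ i j : Fin n, g i i * x i j = y i j * g j j := by
      intro i j
      have h3 : (g * x) i j = (y * g) i j := by rw [hgx]
      rw [hg] at h3
      rwa [Matrix.diagonal_mul, Matrix.mul_diagonal] at h3
    intro m _ hm
    apply Polynomial.funext
    intro t
    rw [eval_charpoly, eval_charpoly]
    set D := Matrix.diagonal (fun i : Fin m => g (Fin.castLE hm i) (Fin.castLE hm i)) with hD
    set Dinv := Matrix.diagonal (fun i : Fin m => (g (Fin.castLE hm i) (Fin.castLE hm i))⁻¹)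
      with hDinv
    have hDD : D * Dinv = 1 := by
      rw [hD, hDinv, Matrix.diagonal_mul_diagonal]
      have hfun : (fun i : Fin m => g (Fin.castLE hm i) (Fin.castLE hm i) *
          (g (Fin.castLE hm i) (Fin.castLE hm i))⁻¹) = fun _ => (1:ℂ) :=
        funext fun i => mul_inv_cancel₀ (hv _)
      rw [hfun, Matrix.diagonal_one]
    have hclaim : D * (t • (1 : Matrix (Fin m) (Fin m) ℂ) - cutoff x hm) * Dinv =
        t • (1 : Matrix (Fin m) (Fin m) ℂ) - cutoff y hm := by
      ext i j
      rw [Matrix.mul_diagonal, Matrix.diagonal_mul]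
      have hxy := hentry (Fin.castLE hm i) (Fin.castLE hm j)
      have hA := hv (Fin.castLE hm i)
      have hB := hv (Fin.castLE hm j)
      by_cases hij : i = j
      · subst hij
        simp only [Matrix.sub_apply, Matrix.smul_apply, Matrix.one_apply_eq, smul_eq_mul,
          mul_one, cutoff, Matrix.of_apply]
        have hxx : x (Fin.castLE hm i) (Fin.castLE hm i) =
            y (Fin.castLE hm i) (Fin.castLE hm i) := by
          apply mul_left_cancel₀ hA
          rw [hxy]; ring
        rw [hxx, mul_right_comm, mul_inv_cancel₀ hA, one_mul]
      · simp only [Matrix.sub_apply, Matrix.smul_apply, Matrix.one_apply_ne hij, smul_zero,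
          zero_sub, cutoff, Matrix.of_apply]
        rw [mul_neg, neg_mul, neg_inj, hxy, mul_assoc, mul_inv_cancel₀ hB, mul_one]
    calc (t • (1 : Matrix (Fin m) (Fin m) ℂ) - cutoff x hm).det
        = D.det * (t • (1 : Matrix (Fin m) (Fin m) ℂ) - cutoff x hm).det * Dinv.det := by
          rw [mul_right_comm, ← Matrix.det_mul, hDD, Matrix.det_one, one_mul]
      _ = (D * (t • (1 : Matrix (Fin m) (Fin m) ℂ) - cutoff x hm) * Dinv).det := by
          rw [Matrix.det_mul, Matrix.det_mul]
      _ = (t • (1 : Matrix (Fin m) (Fin m) ℂ) - cutoff y hm).det := by rw [hclaim]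
  · intro hch
    -- construct the diagonal conjugating matrix
    have hdiagxy := diag_eq x y hch
    have hprod := prod_eq x y hx hy hch
    set f : ℕ → ℂ := fun k => Nat.rec 1 (fun k fk => fk *
      (if h : k + 1 < n then x ⟨k, by omega⟩ ⟨k+1, h⟩ / y ⟨k, by omega⟩ ⟨k+1, h⟩ else 1)) k
      with hf
    have hfs : ∀ k : ℕ, f (k+1) = f k *
        (if h : k + 1 < n then x ⟨k, by omega⟩ ⟨k+1, h⟩ / y ⟨k, by omega⟩ ⟨k+1, h⟩ else 1) :=
      fun k => rfl
    have hfne : ∀ k : ℕ, f k ≠ 0 := by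
      intro k
      induction k with
      | zero => exact one_ne_zero
      | succ k ih =>
        rw [hfs k]
        apply mul_ne_zero ih
        by_cases h : k + 1 < n
        · rw [dif_pos h]
          exact div_ne_zero (hx.2 _ _ (Or.inl rfl)) (hy.2 _ _ (Or.inl rfl))
        · rw [dif_neg h]
          exact one_ne_zero
    set g : Matrix (Fin n) (Fin n) ℂ := Matrix.diagonal (fun i : Fin n => f i.1) with hg
    have hdet : IsUnit g.det := by
      rw [hg, Matrix.det_diagonal]
      exact (Finset.prod_ne_zero_iff.mpr (fun i _ => hfne i.1)).isUnit
    have hu : IsUnit g := (Matrix.isUnit_iff_isUnit_det g).mpr hdet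
    refine ⟨g, hu, Matrix.isDiag_diagonal _, ?_⟩
    have hgx : g * x = y * g := by
      ext i j
      rw [hg, Matrix.diagonal_mul, Matrix.mul_diagonal]
      rcases lt_trichotomy i.1 j.1 with hlt | heq | hgt
      · rcases Nat.lt_or_ge j.1 (i.1 + 2) with hj2 | hj2
        · -- j = i + 1 : superdiagonal
          have hij : j.1 = i.1 + 1 := by omega
          have hfj : f j.1 = f i.1 * (x i j / y i j) := by
            rw [hij, hfs i.1, dif_pos (hij ▸ j.2)]
            congr 2 <;> exact congrArg₂ _ (Fin.ext rfl) (Fin.ext hij.symm)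
          rw [hfj]
          have hyne := hy.2 i j (Or.inl hij.symm)
          field_simp
        · -- far above diagonal: both zero
          rw [hx.1 i j (Or.inl (by omega)), hy.1 i j (Or.inl (by omega))]
          ring
      · have : i = j := Fin.ext heq
        subst this
        have := hdiagxy i.1 i.2
        have hxi : x ⟨i.1, i.2⟩ ⟨i.1, i.2⟩ = x i i := by congr 1 <;> exact Fin.ext rfl
        have hyi : y ⟨i.1, i.2⟩ ⟨i.1, i.2⟩ = y i i := by congr 1 <;> exact Fin.ext rfl
        rw [hxi, hyi] at this
        rw [this]
        ring
      · rcases Nat.lt_or_ge i.1 (j.1 + 2) with hi2 | hi2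
        · -- i = j + 1 : subdiagonal
          have hij : i.1 = j.1 + 1 := by omega
          have hfi : f i.1 = f j.1 * (x j i / y j i) := by
            rw [hij, hfs j.1, dif_pos (hij ▸ i.2)]
            congr 2 <;> exact congrArg₂ _ (Fin.ext rfl) (Fin.ext hij.symm)
          have hp : x i j * x j i = y i j * y j i := by
            have := hprod j.1 (by omega)
            have e1 : (⟨j.1 + 1, by omega⟩ : Fin n) = i := Fin.ext hij.symm
            have e2 : (⟨j.1, by omega⟩ : Fin n) = j := Fin.ext rfl
            rw [e1, e2] at this
            linear_combination this
          rw [hfi]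
          have hyne := hy.2 j i (Or.inl hij.symm)
          have hyne2 := hy.2 i j (Or.inr hij.symm)
          field_simp
          linear_combination f j.1 * hp
        · -- far below diagonal: both zero
          rw [hx.1 i j (Or.inr (by omega)), hy.1 i j (Or.inr (by omega))]
          ring
    rw [hgx, mul_assoc, Matrix.mul_nonsing_inv g hdet, mul_one]
end
end

section
/- Let x, y ∈ M(n) be real symmetric Jacobi matrices with positive adjacent diagonals (i.e. all entries on the superdiagonal and subdiagonal are positive). If the characteristic polynomial of x_m equals the characteristic polynomial of y_m for every m ∈ {1,...,n}, then x = y. -/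
open Matrix Polynomial

noncomputable section

attribute [local instance] Matrix.normedAddCommGroup Matrix.normedSpace

lemma charpoly_conj_unitary' {m : ℕ} (U B : Matrix (Fin m) (Fin m) ℂ)
    (h1 : U * Uᴴ = 1) : (U * B * Uᴴ).charpoly = B.charpoly := by
  have key : charmatrix (U * B * Uᴴ) = U.map C * charmatrix B * Uᴴ.map C := by
    simp only [charmatrix, Matrix.mul_sub, Matrix.sub_mul]
    congr 1
    · have hc : U.map C * Matrix.scalar (Fin m) (X : ℂ[X]) =
          Matrix.scalar (Fin m) (X : ℂ[X]) * U.map C :=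
        (Matrix.scalar_commute (X : ℂ[X]) (fun r => Commute.all _ _) (U.map C)).symm
      rw [hc, Matrix.mul_assoc, ← Matrix.map_mul, h1]
      simp
    · simp only [RingHom.mapMatrix_apply, ← Matrix.map_mul]
  unfold Matrix.charpoly
  rw [key, Matrix.det_mul, Matrix.det_mul]
  have h3 : (U.map C).det * (Uᴴ.map C).det = 1 := by
    rw [← Matrix.det_mul, ← Matrix.map_mul, h1]
    simp
  calc (U.map C).det * (charmatrix B).det * (Uᴴ.map C).det
      = (U.map C).det * (Uᴴ.map C).det * (charmatrix B).det := by ring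
    _ = (charmatrix B).det := by rw [h3, one_mul]

lemma charpoly_diag {m : ℕ} (d : Fin m → ℂ) :
    (Matrix.diagonal d).charpoly = ∏ i, (X - C (d i)) := by
  rw [Matrix.charpoly_of_upperTriangular _ (Matrix.blockTriangular_diagonal d)]
  simp

lemma roots_charpoly_diag {m : ℕ} (d : Fin m → ℂ) :
    (Matrix.diagonal d).charpoly.roots = Finset.univ.val.map d := by
  rw [charpoly_diag, Finset.prod_eq_multiset_prod]
  have : Multiset.map (fun i => X - C (d i)) Finset.univ.val
      = Multiset.map (fun a => X - C a) (Multiset.map d Finset.univ.val) :=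
    (Multiset.map_map (fun a : ℂ => X - C a) d Finset.univ.val).symm
  rw [this, Polynomial.roots_multiset_prod_X_sub_C]

lemma trace_sq_hermitian {m : ℕ} (A : Matrix (Fin m) (Fin m) ℂ) (hA : A.IsHermitian) :
    (A * A).trace = (A.charpoly.roots.map (fun z => z ^ 2)).sum := by
  set U : Matrix (Fin m) (Fin m) ℂ := (hA.eigenvectorUnitary : Matrix (Fin m) (Fin m) ℂ) with hU
  have h1 : U * Uᴴ = 1 := by
    have := Matrix.mem_unitaryGroup_iff.mp hA.eigenvectorUnitary.2
    simpa [hU, Matrix.star_eq_conjTranspose] using this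
  have h2 : Uᴴ * U = 1 := mul_eq_one_comm.mp h1
  set D : Matrix (Fin m) (Fin m) ℂ :=
    Matrix.diagonal (RCLike.ofReal ∘ hA.eigenvalues) with hD
  have hsp : A = U * D * Uᴴ := by
    have := hA.spectral_theorem
    simpa [hU, hD, Matrix.star_eq_conjTranspose] using this
  have hch : A.charpoly = D.charpoly := by
    rw [hsp]; exact charpoly_conj_unitary' U D h1
  have htr : (A * A).trace = (D * D).trace := by
    rw [hsp]
    have e1 : (U*D*Uᴴ) * (U*D*Uᴴ) = U*D*((Uᴴ*U)*(D*Uᴴ)) := by noncomm_ring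
    have e2 : U*D*((1 : Matrix (Fin m) (Fin m) ℂ)*(D*Uᴴ)) = U*(D*D)*Uᴴ := by noncomm_ring
    rw [e1, h2, e2, Matrix.trace_mul_cycle, ← Matrix.mul_assoc, h2, Matrix.one_mul]
  rw [htr, hch, hD, roots_charpoly_diag, Multiset.map_map]
  rw [Matrix.diagonal_mul_diagonal, Matrix.trace_diagonal]
  rw [Finset.sum_eq_multiset_sum]
  congr 1
  apply Multiset.map_congr rfl
  intro i _
  simp [sq]

section main
variable {n : ℕ} (x : Matrix (Fin n) (Fin n) ℂ)

lemma cutoff_isHermitian (hxr : ∀ i j : Fin n, (x i j).im = 0) (hxs : x = xᵀ)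
    {m : ℕ} (hm : m ≤ n) : (cutoff x hm).IsHermitian := by
  ext i j
  simp only [cutoff, Matrix.conjTranspose_apply, Matrix.of_apply]
  rw [show x (Fin.castLE hm j) (Fin.castLE hm i)
      = x (Fin.castLE hm i) (Fin.castLE hm j) from by
    conv_lhs => rw [hxs]
    rw [Matrix.transpose_apply]]
  exact (Complex.conj_eq_iff_im).mpr (hxr _ _)

def Gd : ℕ → ℂ := fun i => if h : i < n then x ⟨i, h⟩ ⟨i, h⟩ else 0

def Fd : ℕ → ℕ → ℂ := fun i j =>
  if hi : i < n then if hj : j < n then x ⟨i, hi⟩ ⟨j, hj⟩ * x ⟨j, hj⟩ ⟨i, hi⟩ else 0 else 0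

lemma trace_cutoff_eq_s13 {m : ℕ} (hm : m ≤ n) :
    (cutoff x hm).trace = ∑ i ∈ Finset.range m, Gd x i := by
  rw [Matrix.trace, ← Fin.sum_univ_eq_sum_range]
  apply Finset.sum_congr rfl
  intro i _
  have hi : i.1 < n := lt_of_lt_of_le i.2 hm
  simp [Matrix.diag, cutoff, Gd, hi]
  congr

lemma trace_sq_cutoff_eq {m : ℕ} (hm : m ≤ n) :
    (cutoff x hm * cutoff x hm).trace
      = ∑ i ∈ Finset.range m, ∑ j ∈ Finset.range m, Fd x i j := by
  rw [Matrix.trace]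
  rw [show (Matrix.diag (cutoff x hm * cutoff x hm)) = fun i =>
    ∑ j, cutoff x hm i j * cutoff x hm j i from by ext i; simp [Matrix.diag, Matrix.mul_apply]]
  rw [← Fin.sum_univ_eq_sum_range (fun i => ∑ j ∈ Finset.range m, Fd x i j)]
  apply Finset.sum_congr rfl
  intro i _
  rw [← Fin.sum_univ_eq_sum_range]
  apply Finset.sum_congr rfl
  intro j _
  have hi : i.1 < n := lt_of_lt_of_le i.2 hm
  have hj : j.1 < n := lt_of_lt_of_le j.2 hm
  simp [cutoff, Fd, hi, hj]
  congr

end main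

lemma sq_cancel_pos (z w : ℂ) (hz : z.im = 0) (hw : w.im = 0)
    (hzr : 0 < z.re) (hwr : 0 < w.re) (h : z ^ 2 = w ^ 2) : z = w := by
  have hz' : z = (z.re : ℂ) := Complex.ext rfl (by simp [hz])
  have hw' : w = (w.re : ℂ) := Complex.ext rfl (by simp [hw])
  rw [hz', hw'] at h ⊢
  norm_cast at h ⊢
  nlinarith

section main2
variable {n : ℕ} (x y : Matrix (Fin n) (Fin n) ℂ)

lemma Fd_expand (hj : ∀ i j : Fin n, (i.1 + 1 < j.1 ∨ j.1 + 1 < i.1) → x i j = 0)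
    (k : ℕ) (hk : k + 2 ≤ n) :
    ∑ i ∈ Finset.range (k+2), ∑ j ∈ Finset.range (k+2), Fd x i j
      = (∑ i ∈ Finset.range (k+1), ∑ j ∈ Finset.range (k+1), Fd x i j)
        + (Fd x k (k+1) + Fd x (k+1) k + Fd x (k+1) (k+1)) := by
  have hzero : ∀ i < k, Fd x i (k+1) = 0 ∧ Fd x (k+1) i = 0 := by
    intro i hi
    have hi' : i < n := by omega
    have h1 : x ⟨i, hi'⟩ ⟨k+1, by omega⟩ = 0 := hj _ _ (Or.inl (by simp; omega))
    have h2 : x ⟨k+1, by omega⟩ ⟨i, hi'⟩ = 0 := hj _ _ (Or.inr (by simp; omega))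
    constructor <;> simp [Fd, hi', (by omega : k+1 < n), h1, h2]
  rw [Finset.sum_range_succ]
  have hcross1 : ∑ j ∈ Finset.range (k+2), Fd x (k+1) j
      = (Fd x (k+1) k + Fd x (k+1) (k+1)) := by
    rw [Finset.sum_range_succ, Finset.sum_eq_single_of_mem k (by simp)]
    intro b hb hbk
    exact (hzero b (by simp at hb; omega)).2
  have hinner : ∀ i ∈ Finset.range (k+1), ∑ j ∈ Finset.range (k+2), Fd x i j
      = ∑ j ∈ Finset.range (k+1), Fd x i j + Fd x i (k+1) := by
    intro i hi
    rw [Finset.sum_range_succ]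
  rw [Finset.sum_congr rfl hinner, Finset.sum_add_distrib]
  have hcross2 : ∑ i ∈ Finset.range (k+1), Fd x i (k+1) = Fd x k (k+1) := by
    rw [Finset.sum_eq_single_of_mem k (by simp)]
    intro b hb hbk
    exact (hzero b (by simp at hb; omega)).1
  rw [hcross1, hcross2]
  ring

end main2


/-- Two real symmetric Jacobi matrices with positive adjacent diagonals and
equal cutoff characteristic polynomials are equal. -/
theorem stmt13 (n : ℕ) (x y : Matrix (Fin n) (Fin n) ℂ)
    (hxr : ∀ i j : Fin n, (x i j).im = 0) (hyr : ∀ i j : Fin n, (y i j).im = 0)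
    (hxs : x = xᵀ) (hys : y = yᵀ)
    (hxj : IsJacobi x) (hyj : IsJacobi y)
    (hxp : ∀ i j : Fin n, (i.1 + 1 = j.1 ∨ j.1 + 1 = i.1) → 0 < (x i j).re)
    (hyp : ∀ i j : Fin n, (i.1 + 1 = j.1 ∨ j.1 + 1 = i.1) → 0 < (y i j).re)
    (hch : ∀ (m : ℕ) (_ : 1 ≤ m) (hm : m ≤ n),
      (cutoff x hm).charpoly = (cutoff y hm).charpoly) :
    x = y := by
  -- trace equalities
  have hT : ∀ (m : ℕ) (hm : m ≤ n),
      ∑ i ∈ Finset.range m, Gd x i = ∑ i ∈ Finset.range m, Gd y i := by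
    intro m hm
    rcases Nat.eq_zero_or_pos m with rfl | hm1
    · simp
    · rw [← trace_cutoff_eq_s13 x hm, ← trace_cutoff_eq_s13 y hm]
      haveI : Nonempty (Fin m) := ⟨⟨0, hm1⟩⟩
      rw [Matrix.trace_eq_neg_charpoly_coeff, Matrix.trace_eq_neg_charpoly_coeff,
        hch m hm1 hm]
  have hS : ∀ (m : ℕ) (hm : m ≤ n),
      ∑ i ∈ Finset.range m, ∑ j ∈ Finset.range m, Fd x i j
        = ∑ i ∈ Finset.range m, ∑ j ∈ Finset.range m, Fd y i j := by
    intro m hm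
    rcases Nat.eq_zero_or_pos m with rfl | hm1
    · simp
    · rw [← trace_sq_cutoff_eq x hm, ← trace_sq_cutoff_eq y hm,
        trace_sq_hermitian _ (cutoff_isHermitian x hxr hxs hm),
        trace_sq_hermitian _ (cutoff_isHermitian y hyr hys hm), hch m hm1 hm]
  -- diagonal equality
  have hGd : ∀ (k : ℕ), k < n → Gd x k = Gd y k := by
    intro k hk
    have h1 := hT (k+1) hk
    have h0 := hT k (le_of_lt hk)
    rw [Finset.sum_range_succ, Finset.sum_range_succ, h0] at h1
    exact add_left_cancel h1
  have hdiag : ∀ k : Fin n, x k k = y k k := by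
    intro k
    have := hGd k.1 k.2
    simpa [Gd, k.2, Fin.eta] using this
  -- superdiagonal equality
  have hsup : ∀ (k : ℕ) (hk : k + 1 < n),
      x ⟨k, by omega⟩ ⟨k+1, hk⟩ = y ⟨k, by omega⟩ ⟨k+1, hk⟩ := by
    intro k hk
    have hk2 : k + 2 ≤ n := hk
    have h2 := hS (k+2) hk2
    have h1 := hS (k+1) (by omega)
    rw [Fd_expand x hxj.1 k hk2, Fd_expand y hyj.1 k hk2, h1] at h2
    have h3 := add_left_cancel h2
    set a : Fin n := ⟨k, by omega⟩
    set b : Fin n := ⟨k+1, hk⟩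
    have hxba : x b a = x a b := by conv_lhs => rw [hxs, Matrix.transpose_apply]
    have hyba : y b a = y a b := by conv_lhs => rw [hys, Matrix.transpose_apply]
    have hfx1 : Fd x k (k+1) = x a b ^ 2 := by
      simp [Fd, (by omega : k < n), (by omega : k + 1 < n), a, b, hxba, sq]
    have hfx2 : Fd x (k+1) k = x a b ^ 2 := by
      simp [Fd, (by omega : k < n), (by omega : k + 1 < n), a, b, hxba, sq]
    have hfy1 : Fd y k (k+1) = y a b ^ 2 := by
      simp [Fd, (by omega : k < n), (by omega : k + 1 < n), a, b, hyba, sq]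
    have hfy2 : Fd y (k+1) k = y a b ^ 2 := by
      simp [Fd, (by omega : k < n), (by omega : k + 1 < n), a, b, hyba, sq]
    have hfd : Fd x (k+1) (k+1) = Fd y (k+1) (k+1) := by
      simp [Fd, (by omega : k + 1 < n), hdiag]
    rw [hfx1, hfx2, hfy1, hfy2, hfd] at h3
    have hsq : x a b ^ 2 = y a b ^ 2 := by
      have := add_right_cancel h3
      linear_combination this / 2
    exact sq_cancel_pos _ _ (hxr a b) (hyr a b) (hxp a b (Or.inl rfl))
      (hyp a b (Or.inl rfl)) hsq
  ext i j
  obtain h | h | h | h | h :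
      i.1 + 1 < j.1 ∨ j.1 + 1 < i.1 ∨ i.1 = j.1 ∨ i.1 + 1 = j.1 ∨ j.1 + 1 = i.1 := by omega
  · rw [hxj.1 i j (Or.inl h), hyj.1 i j (Or.inl h)]
  · rw [hxj.1 i j (Or.inr h), hyj.1 i j (Or.inr h)]
  · have : i = j := Fin.ext h
    subst this; exact hdiag i
  · have hi : i = ⟨i.1, i.2⟩ := rfl
    have hj' : j = ⟨i.1 + 1, by omega⟩ := Fin.ext h.symm
    rw [hi, hj']
    exact hsup i.1 (by omega)
  · have hxij : x i j = x j i := by conv_lhs => rw [hxs, Matrix.transpose_apply]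
    have hyij : y i j = y j i := by conv_lhs => rw [hys, Matrix.transpose_apply]
    rw [hxij, hyij]
    have hj' : j = ⟨j.1, j.2⟩ := rfl
    have hi' : i = ⟨j.1 + 1, by omega⟩ := Fin.ext h.symm
    rw [hj', hi']
    exact hsup j.1 (by omega)
end
end

section
/- Let x ∈ M(n) satisfy the eigenvalue disjointness condition and let m ∈ {1,...,n−1}. Let e_m ∈ ℂ^m denote the m-th standard basis vector. Then the m vectors (x_m)^j e_m, for j = 0, 1, ..., m−1, form a basis of ℂ^m; that is, e_m is a cyclic vector for the matrix x_m acting on ℂ^m. -/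
open Matrix Polynomial

noncomputable section

attribute [local instance] Matrix.normedAddCommGroup Matrix.normedSpace

lemma eval_charpoly' {k : ℕ} (M : Matrix (Fin k) (Fin k) ℂ) (t : ℂ) :
    M.charpoly.eval t = (Matrix.diagonal (fun _ => t) - M).det := by
  rw [Matrix.charpoly, ← Polynomial.coe_evalRingHom, RingHom.map_det]
  congr 1
  ext i j
  by_cases h : i = j <;>
    simp [h, Matrix.charmatrix_apply, Matrix.diagonal_apply, Matrix.sub_apply]

lemma isRoot_iff_vecMul {k : ℕ} (M : Matrix (Fin k) (Fin k) ℂ) (t : ℂ) :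
    M.charpoly.IsRoot t ↔ ∃ w : Fin k → ℂ, w ≠ 0 ∧ M.vecMul w = t • w := by
  rw [Polynomial.IsRoot, eval_charpoly']
  rw [← Matrix.det_transpose, ← Matrix.exists_mulVec_eq_zero_iff]
  constructor
  · rintro ⟨w, hw, h⟩
    refine ⟨w, hw, ?_⟩
    funext j
    have := congrFun h j
    simp [Matrix.mulVec, Matrix.vecMul, dotProduct, Matrix.transpose_apply,
      Matrix.sub_apply, Matrix.diagonal_apply, mul_sub, mul_ite, mul_zero,
      Finset.sum_sub_distrib, Finset.sum_ite_eq', mul_comm] at this ⊢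
    linear_combination -this
  · rintro ⟨w, hw, h⟩
    refine ⟨w, hw, ?_⟩
    funext j
    have := congrFun h j
    simp [Matrix.mulVec, Matrix.vecMul, dotProduct, Matrix.transpose_apply,
      Matrix.sub_apply, Matrix.diagonal_apply, mul_sub, mul_ite, mul_zero,
      Finset.sum_sub_distrib, Finset.sum_ite_eq', mul_comm] at this ⊢
    linear_combination -this

lemma key_last {n k : ℕ} (x : Matrix (Fin n) (Fin n) ℂ) (hx : EigDisjoint x)
    (hkn : k + 1 ≤ n)
    (t : ℂ) (ht : ((cutoff x hkn).charpoly).IsRoot t)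
    (w : Fin (k+1) → ℂ) (hw : w ≠ 0)
    (hvm : (cutoff x hkn).vecMul w = t • w) :
    w (Fin.last k) ≠ 0 := by
  intro h0
  rcases Nat.eq_zero_or_pos k with rfl | hk
  · apply hw
    funext i
    have hi : i = Fin.last 0 := by ext; omega
    have hwi : w i = 0 := by rw [hi]; exact h0
    simpa using hwi
  · have hkn' : k ≤ n := by omega
    set A := cutoff x hkn with hA
    set B := cutoff x hkn' with hB
    set w' : Fin k → ℂ := fun i => w i.castSucc with hw'def
    have hw' : w' ≠ 0 := by
      intro h
      apply hw
      funext i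
      refine Fin.lastCases ?_ ?_ i
      · exact h0
      · intro j; exact congrFun h j
    have hBA : ∀ i j : Fin k, B i j = A i.castSucc j.castSucc := by
      intro i j; rfl
    have hBv : B.vecMul w' = t • w' := by
      funext j
      have hAj := congrFun hvm j.castSucc
      simp only [Matrix.vecMul, dotProduct, Pi.smul_apply, smul_eq_mul] at hAj ⊢
      rw [Fin.sum_univ_castSucc, h0, zero_mul, add_zero] at hAj
      simpa [hw'def, hBA] using hAj
    have hrootB : B.charpoly.IsRoot t := (isRoot_iff_vecMul B t).2 ⟨w', hw', hBv⟩
    exact hx.2 k hk hkn t ⟨hrootB, ht⟩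

/-- If `x` satisfies the eigenvalue disjointness condition and
`1 ≤ m ≤ n - 1`, then the `m`-th standard basis vector `e_m` is a cyclic vector for `x_m`:
the vectors `(x_m)^j e_m`, `j = 0,…,m-1`, form a basis of `ℂ^m`. -/
theorem stmt15 (n : ℕ) (x : Matrix (Fin n) (Fin n) ℂ) (hx : EigDisjoint x)
    (m : ℕ) (hm1 : 1 ≤ m) (hm : m + 1 ≤ n) :
    LinearIndependent ℂ (fun j : Fin m =>
      ((cutoff x (Nat.le_of_succ_le hm)) ^ (j : ℕ)).mulVec
        (fun i : Fin m => if i.1 + 1 = m then (1 : ℂ) else 0)) ∧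
    Submodule.span ℂ (Set.range (fun j : Fin m =>
      ((cutoff x (Nat.le_of_succ_le hm)) ^ (j : ℕ)).mulVec
        (fun i : Fin m => if i.1 + 1 = m then (1 : ℂ) else 0))) = ⊤ := by
  obtain ⟨k, rfl⟩ : ∃ k, m = k + 1 := ⟨m - 1, by omega⟩
  have hkn : k + 1 ≤ n := Nat.le_of_succ_le hm
  set A := cutoff x (Nat.le_of_succ_le hm) with hA
  set v : Fin (k+1) → ℂ := fun i : Fin (k+1) => if i.1 + 1 = k + 1 then (1 : ℂ) else 0 with hv
  have hdot : ∀ w : Fin (k+1) → ℂ, w ⬝ᵥ v = w (Fin.last k) := by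
    intro w
    have hcond : ∀ i : Fin (k+1), (i.1 + 1 = k + 1) = (i = Fin.last k) := by
      intro i
      simp only [eq_iff_iff, Fin.ext_iff, Fin.val_last]
      omega
    simp only [dotProduct, hv, hcond, mul_ite, mul_one, mul_zero]
    simp [Finset.sum_ite_eq']
  have hkey : ∀ t : ℂ, A.charpoly.IsRoot t →
      ∃ w : Fin (k+1) → ℂ, A.vecMul w = t • w ∧ w ⬝ᵥ v ≠ 0 := by
    intro t ht
    obtain ⟨w, hw, hvm⟩ := (isRoot_iff_vecMul A t).1 ht
    refine ⟨w, hvm, ?_⟩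
    rw [hdot]
    exact key_last x hx hkn t ht w hw hvm
  have hpow : ∀ (t : ℂ) (w : Fin (k+1) → ℂ), A.vecMul w = t • w →
      ∀ j : ℕ, w ⬝ᵥ (A ^ j).mulVec v = t ^ j * (w ⬝ᵥ v) := by
    intro t w hw j
    induction j with
    | zero => simp
    | succ j ih =>
      rw [pow_succ', ← Matrix.mulVec_mulVec, Matrix.dotProduct_mulVec, hw,
        smul_dotProduct, smul_eq_mul, ih]
      ring
  have hcard : A.charpoly.roots.toFinset.card = k + 1 := hx.1 (k+1) (by omega) hkn
  have hli : LinearIndependent ℂ (fun j : Fin (k+1) =>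
      (A ^ (j : ℕ)).mulVec v) := by
    rw [Fintype.linearIndependent_iff]
    intro c hc
    set p : Polynomial ℂ := ∑ j : Fin (k+1), Polynomial.C (c j) * Polynomial.X ^ (j : ℕ)
      with hp
    have hproots : ∀ t ∈ A.charpoly.roots.toFinset, p.IsRoot t := by
      intro t htm
      have ht : A.charpoly.IsRoot t :=
        (Polynomial.mem_roots'.1 (Multiset.mem_toFinset.1 htm)).2
      obtain ⟨w, hvm, hwv⟩ := hkey t ht
      have h1 : w ⬝ᵥ (∑ j : Fin (k+1), c j • (A ^ (j : ℕ)).mulVec v) = 0 := by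
        rw [hc]; simp [dotProduct]
      have h2 : w ⬝ᵥ (∑ j : Fin (k+1), c j • (A ^ (j : ℕ)).mulVec v)
          = ∑ j : Fin (k+1), c j * (w ⬝ᵥ (A ^ (j : ℕ)).mulVec v) := by
        simp [dotProduct, Finset.mul_sum]
        rw [Finset.sum_comm]
        congr 1; funext j; congr 1; funext i; ring
      have h3 : ∑ j : Fin (k+1), c j * (w ⬝ᵥ (A ^ (j : ℕ)).mulVec v)
          = p.eval t * (w ⬝ᵥ v) := by
        rw [hp]
        rw [Polynomial.eval_finset_sum]
        rw [Finset.sum_mul]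
        congr 1; funext j
        rw [hpow t w hvm (j : ℕ)]
        simp; ring
      have : p.eval t * (w ⬝ᵥ v) = 0 := by rw [← h3, ← h2, h1]
      rcases mul_eq_zero.1 this with h | h
      · exact h
      · exact absurd h hwv
    have hp0 : p = 0 := by
      by_contra hne
      have hsub : A.charpoly.roots.toFinset ⊆ p.roots.toFinset := by
        intro t htm
        exact Multiset.mem_toFinset.2 ((Polynomial.mem_roots hne).2 (hproots t htm))
      have h1 : k + 1 ≤ p.roots.toFinset.card := hcard ▸ Finset.card_le_card hsub
      have h2 : p.roots.toFinset.card ≤ p.natDegree :=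
        (Multiset.toFinset_card_le _).trans (Polynomial.card_roots' p)
      have h3 : p.natDegree ≤ k := by
        apply Polynomial.natDegree_sum_le_of_forall_le
        intro j _
        exact (Polynomial.natDegree_C_mul_X_pow_le (c j) (j : ℕ)).trans (by omega)
      omega
    intro j
    have := congrArg (fun q => Polynomial.coeff q (j : ℕ)) hp0
    simp only [hp, Polynomial.finset_sum_coeff, Polynomial.coeff_C_mul,
      Polynomial.coeff_X_pow, Polynomial.coeff_zero, mul_ite, mul_one, mul_zero] at this
    simp only [Fin.val_eq_val, Finset.sum_ite_eq, Finset.mem_univ, if_true] at this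
    exact this
  refine ⟨hli, ?_⟩
  exact hli.span_eq_top_of_card_eq_finrank (by simp)
end
end

section
/- Let x ∈ M(n) satisfy the eigenvalue disjointness condition and let m ∈ {1,...,n−1}. Let v ∈ ℂ^m be the vector whose i-th entry is the (i, m+1) entry of x, for i = 1,...,m. Then the m vectors (x_m)^j v, for j = 0, 1, ..., m−1, form a basis of ℂ^m; that is, v is a cyclic vector for the matrix x_m acting on ℂ^m. -/
open Matrix Polynomial

noncomputable section

attribute [local instance] Matrix.normedAddCommGroup Matrix.normedSpace

/-!
If the span `S` of the vectors `(x_m)^j v` were proper, it would be `x_m`-invariant by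
Cayley–Hamilton, so `x_mᵀ` would have an eigenvector `w` in the annihilator of `S`. Since
`v ∈ S`, the extension of `w` by a zero entry is then a left eigenvector of `x_{m+1}` for the same
eigenvalue, contradicting the disjointness of the spectra of `x_m` and `x_{m+1}`.
-/

namespace Matrix

variable {K : Type*} [Field K]

theorem pow_mulVec_mem_span_pow_mulVec {R : Type*} [CommRing R] [Nontrivial R] {m : ℕ}
    (A : Matrix (Fin m) (Fin m) R) (v : Fin m → R) (k : ℕ) :
    (A ^ k) *ᵥ v ∈ Submodule.span R (Set.range fun j : Fin m => (A ^ (j : ℕ)) *ᵥ v) := by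
  set p := (X : R[X]) ^ k %ₘ A.charpoly
  have hp : p.degree < m := by
    simpa [A.charpoly_degree_eq_dim] using degree_modByMonic_lt (X ^ k) A.charpoly_monic
  rw [A.pow_eq_aeval_mod_charpoly k]
  rcases eq_or_ne p 0 with h0 | h0
  · simp [p, h0]
  rw [aeval_eq_sum_range' ((natDegree_lt_iff_degree_lt h0).2 hp), sum_mulVec]
  refine Submodule.sum_mem _ fun i hi => ?_
  rw [smul_mulVec]
  exact Submodule.smul_mem _ _ (Submodule.subset_span ⟨⟨i, Finset.mem_range.1 hi⟩, rfl⟩)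

theorem isRoot_charpoly_of_vecMul_eq_smul {ι : Type*} [Fintype ι] [DecidableEq ι]
    {A : Matrix ι ι K} {μ : K} {w : ι → K} (hw : w ≠ 0) (h : w ᵥ* A = μ • w) :
    A.charpoly.IsRoot μ := by
  rw [← charpoly_transpose, ← charpoly_toLin', ← Module.End.hasEigenvalue_iff_isRoot_charpoly]
  exact Module.End.hasEigenvalue_of_hasEigenvector
    ⟨Module.End.mem_eigenspace_iff.2 (by simpa [mulVec_transpose] using h), hw⟩

theorem exists_vecMul_eq_smul_of_mulVec_mem [IsAlgClosed K] {ι : Type*} [Fintype ι]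
    [DecidableEq ι] (A : Matrix ι ι K) {S : Submodule K (ι → K)} (hS : S ≠ ⊤)
    (hA : ∀ u ∈ S, A *ᵥ u ∈ S) :
    ∃ μ : K, ∃ w ≠ 0, w ᵥ* A = μ • w ∧ ∀ u ∈ S, w ⬝ᵥ u = 0 := by
  set T := S.dualAnnihilator.comap (dotProductEquiv K ι).toLinearMap
  have hmemT : ∀ w, w ∈ T ↔ ∀ u ∈ S, w ⬝ᵥ u = 0 := by
    intro w; simp [T, Submodule.mem_dualAnnihilator]
  have hT : ∀ w ∈ T, Aᵀ.toLin' w ∈ T := by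
    intro w hw
    rw [hmemT] at hw ⊢
    intro u hu
    simpa [mulVec_transpose, dotProduct_mulVec] using hw _ (hA u hu)
  have : Nontrivial T := by
    rw [Submodule.nontrivial_iff_ne_bot]
    simpa [T, Submodule.comap_equiv_eq_map_symm] using hS
  obtain ⟨μ, hμ⟩ := Module.End.exists_eigenvalue (Aᵀ.toLin'.restrict hT)
  obtain ⟨⟨w, hwT⟩, hw⟩ := hμ.exists_hasEigenvector
  refine ⟨μ, w, fun h => hw.2 (by simpa using h), ?_, (hmemT w).1 hwT⟩
  have := congrArg Subtype.val (Module.End.mem_eigenspace_iff.1 hw.1)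
  simpa [mulVec_transpose] using this

theorem snoc_zero_vecMul {R : Type*} [CommSemiring R] {m : ℕ}
    (B : Matrix (Fin (m + 1)) (Fin (m + 1)) R) (w : Fin m → R) :
    (Fin.snoc w 0 : Fin (m + 1) → R) ᵥ* B =
      Fin.snoc (w ᵥ* B.submatrix Fin.castSucc Fin.castSucc)
        (w ⬝ᵥ fun i => B i.castSucc (Fin.last m)) := by
  ext j
  refine Fin.lastCases ?_ (fun j => ?_) j <;> simp [vecMul, dotProduct, Fin.sum_univ_castSucc]

theorem span_pow_mulVec_lastCol_eq_top [IsAlgClosed K] {m : ℕ}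
    (B : Matrix (Fin (m + 1)) (Fin (m + 1)) K)
    (hB : ∀ z, ¬((B.submatrix Fin.castSucc Fin.castSucc).charpoly.IsRoot z ∧
      B.charpoly.IsRoot z)) :
    Submodule.span K (Set.range fun j : Fin m =>
      (B.submatrix Fin.castSucc Fin.castSucc ^ (j : ℕ)) *ᵥ
        fun i => B i.castSucc (Fin.last m)) = ⊤ := by
  set A := B.submatrix Fin.castSucc Fin.castSucc
  set v : Fin m → K := fun i => B i.castSucc (Fin.last m)
  set S := Submodule.span K (Set.range fun j : Fin m => (A ^ (j : ℕ)) *ᵥ v)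
  by_contra hS
  have hA : S ≤ S.comap A.mulVecLin := Submodule.span_le.2 <| by
    rintro _ ⟨j, rfl⟩
    simpa [mulVec_mulVec, ← pow_succ'] using pow_mulVec_mem_span_pow_mulVec A v (j + 1)
  obtain ⟨μ, w, hw0, hwA, hwS⟩ := A.exists_vecMul_eq_smul_of_mulVec_mem hS fun u hu => hA hu
  have hwv : w ⬝ᵥ v = 0 := hwS v (by simpa using pow_mulVec_mem_span_pow_mulVec A v 0)
  refine hB μ ⟨isRoot_charpoly_of_vecMul_eq_smul hw0 hwA,
    isRoot_charpoly_of_vecMul_eq_smul (w := Fin.snoc w 0) ?_ ?_⟩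
  · exact fun h => hw0 (funext fun i => by simpa using congrFun h i.castSucc)
  · rw [snoc_zero_vecMul, hwA, hwv]
    ext j
    refine Fin.lastCases ?_ (fun j => ?_) j <;> simp

end Matrix

/-- If `x` satisfies the eigenvalue disjointness condition and
`1 ≤ m ≤ n - 1`, the vector `v` of entries `x i (m+1)`, `i = 1,…,m`, is a cyclic vector
for `x_m`: the vectors `(x_m)^j v`, `j = 0,…,m-1`, form a basis of `ℂ^m`. -/
theorem stmt16 (n : ℕ) (x : Matrix (Fin n) (Fin n) ℂ) (hx : EigDisjoint x)
    (m : ℕ) (hm1 : 1 ≤ m) (hm : m + 1 ≤ n) :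
    LinearIndependent ℂ (fun j : Fin m =>
      ((cutoff x (Nat.le_of_succ_le hm)) ^ (j : ℕ)).mulVec
        (fun i : Fin m => x (Fin.castLE (Nat.le_of_succ_le hm) i) ⟨m, hm⟩)) ∧
    Submodule.span ℂ (Set.range (fun j : Fin m =>
      ((cutoff x (Nat.le_of_succ_le hm)) ^ (j : ℕ)).mulVec
        (fun i : Fin m => x (Fin.castLE (Nat.le_of_succ_le hm) i) ⟨m, hm⟩))) = ⊤ := by
  -- `cutoff x (m ≤ n)` is definitionally the top-left `m × m` block of `cutoff x hm`.
  have hspan := (cutoff x hm).span_pow_mulVec_lastCol_eq_top (hx.2 m hm1 hm)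
  refine ⟨linearIndependent_of_top_le_span_of_card_eq_finrank hspan.ge (by simp), hspan⟩
end
end
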